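/- arXiv:2304.03334 — 6 statements merged into one kernel-verified Lean document; each statement's English description precedes it below -/
import Mathlib

section
/- Let G ⊆ ℂ be a domain, let F ⊆ G be relatively closed in G, and let G* = G ∪ {∞} be the one-point (Alexandroff) compactification of G. Then the subspace G* \ F is connected if and only if every connected component of the open set G \ F is unbounded or has an accumulation point on the frontier of G in ℂ (i.e., the closure of the component in ℂ meets the frontier of G). -/
open Set Metric OnePoint

/-- Let `G ⊆ ℂ` be a domain, `F ⊆ G` relatively closed in `G`, and let
`G* = OnePoint ↥G` be the one-point (Alexandroff) compactification of `G`. The subspace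
`G* \ F` (here the set `S = {∞} ∪ {points of G not in F}`) is connected if and only if
every connected component of `G \ F` is unbounded or its closure in `ℂ` meets the
frontier of `G`. -/
theorem onePoint_compl_connected_iff
    (G F : Set ℂ) (hGopen : IsOpen G) (hGconn : IsConnected G)
    (hFG : F ⊆ G) (hFclosed : closure F ∩ G ⊆ F)
    (S : Set (OnePoint ↥G))
    (hS : S = {OnePoint.infty} ∪ (fun z : ↥G => (z : OnePoint ↥G)) '' {z : ↥G | (z : ℂ) ∉ F}) :
    IsConnected S ↔
      ∀ z ∈ G \ F,
        ¬ Bornology.IsBounded (connectedComponentIn (G \ F) z) ∨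
          (closure (connectedComponentIn (G \ F) z) ∩ frontier G).Nonempty := by
  -- G \ F is open
  have hOpen : IsOpen (G \ F) := by
    have : G \ F = G ∩ (closure F)ᶜ := by
      apply Subset.antisymm
      · rintro w ⟨hwG, hwF⟩
        exact ⟨hwG, fun hcl => hwF (hFclosed ⟨hcl, hwG⟩)⟩
      · rintro w ⟨hwG, hw⟩
        exact ⟨hwG, fun hwF => hw (subset_closure hwF)⟩
    rw [this]
    exact hGopen.inter isClosed_closure.isOpen_compl
  have hfrG : ∀ p ∈ G, p ∉ frontier G := by
    intro p hp hfp
    rw [hGopen.frontier_eq] at hfp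
    exact hfp.2 hp
  -- if a point of G \ F is in the closure of a component, it is in the component
  have hclcomp : ∀ z ∈ G \ F, ∀ w ∈ G \ F,
      w ∈ closure (connectedComponentIn (G \ F) z) → w ∈ connectedComponentIn (G \ F) z := by
    intro z hz w hw hcl
    have hwopen : IsOpen (connectedComponentIn (G \ F) w) := hOpen.connectedComponentIn
    have hmem : w ∈ connectedComponentIn (G \ F) w := mem_connectedComponentIn hw
    obtain ⟨p, hp1, hp2⟩ := mem_closure_iff.mp hcl _ hwopen hmem
    have e1 := connectedComponentIn_eq hp1
    have e2 := connectedComponentIn_eq hp2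
    rw [e1, ← e2] at hmem
    exact hmem
  constructor
  · -- S connected → every component unbounded or touches frontier
    intro hconn z hz
    by_contra hcon
    push_neg at hcon
    obtain ⟨hbdd, hnofr⟩ := hcon
    set C := connectedComponentIn (G \ F) z with hC
    have hCsub : C ⊆ G \ F := connectedComponentIn_subset _ _
    have hKcpt : IsCompact (closure C) := hbdd.isCompact_closure
    have hKG : closure C ⊆ G := by
      intro p hp
      have hpG : p ∈ closure G := closure_mono (hCsub.trans diff_subset) hp
      rcases (closure_eq_self_union_frontier G ▸ hpG) with h | h
      · exact h
      · exact absurd (⟨p, ⟨hp, h⟩⟩ : (closure C ∩ frontier G).Nonempty)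
          (by rw [hnofr]; exact not_nonempty_empty)
    set C' : Set ↥G := Subtype.val ⁻¹' C with hC'
    set K' : Set ↥G := Subtype.val ⁻¹' closure C with hK'
    have hK'cpt : IsCompact K' := by
      rw [Topology.IsEmbedding.subtypeVal.isCompact_iff]
      rwa [Subtype.image_preimage_coe, inter_eq_right.mpr hKG]
    have hK'cl : IsClosed K' := isClosed_closure.preimage continuous_subtype_val
    set U : Set (OnePoint ↥G) := (fun z : ↥G => (z : OnePoint ↥G)) '' C' with hU
    set V : Set (OnePoint ↥G) := ((fun z : ↥G => (z : OnePoint ↥G)) '' K')ᶜ with hV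
    have hUopen : IsOpen U := isOpen_image_coe.mpr
      ((hOpen.connectedComponentIn).preimage continuous_subtype_val)
    have hVopen : IsOpen V := isOpen_compl_image_coe.mpr ⟨hK'cl, hK'cpt⟩
    have hcover : S ⊆ U ∪ V := by
      rw [hS]
      rintro x (rfl | ⟨w, hw, rfl⟩)
      · exact Or.inr (by exact infty_notMem_image_coe)
      · by_cases hwC : (w : ℂ) ∈ C
        · exact Or.inl ⟨w, hwC, rfl⟩
        · refine Or.inr ?_
          rintro ⟨v, hv, hve⟩
          have hvw : v = w := coe_injective hve
          have hv' : (w : ℂ) ∈ closure C := hvw ▸ hv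
          exact hwC (hclcomp z hz _ ⟨w.2, hw⟩ hv')
    have hSU : (S ∩ U).Nonempty := by
      refine ⟨(⟨z, hz.1⟩ : ↥G), ?_, ⟨⟨z, hz.1⟩, ?_, rfl⟩⟩
      · rw [hS]; exact Or.inr ⟨⟨z, hz.1⟩, hz.2, rfl⟩
      · exact mem_connectedComponentIn hz
    have hSV : (S ∩ V).Nonempty :=
      ⟨∞, by rw [hS]; exact Or.inl rfl, by exact infty_notMem_image_coe⟩
    obtain ⟨x, -, hxU, hxV⟩ := hconn.isPreconnected _ _ hUopen hVopen hcover hSU hSV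
    obtain ⟨w, hw, rfl⟩ := hxU
    exact hxV ⟨w, subset_closure hw, rfl⟩
  · -- converse
    intro h
    have hinfS : ∞ ∈ S := by rw [hS]; exact Or.inl rfl
    refine ⟨⟨∞, hinfS⟩, ?_⟩
    set 𝒯 : Set (Set (OnePoint ↥G)) :=
      insert {∞} ((fun z : ℂ => insert ∞
        ((fun w : ↥G => (w : OnePoint ↥G)) '' (Subtype.val ⁻¹' connectedComponentIn (G \ F) z)))
        '' (G \ F)) with h𝒯
    have hSeq : S = ⋃₀ 𝒯 := by
      apply Subset.antisymm
      · rw [hS]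
        rintro x (rfl | ⟨w, hw, rfl⟩)
        · exact ⟨{∞}, Or.inl rfl, rfl⟩
        · refine ⟨_, Or.inr ⟨(w : ℂ), ⟨w.2, hw⟩, rfl⟩, Or.inr ⟨w, ?_, rfl⟩⟩
          exact mem_connectedComponentIn ⟨w.2, hw⟩
      · rintro x ⟨T, hT, hxT⟩
        rcases hT with rfl | ⟨zz, hzz, rfl⟩
        · rw [hxT]; exact hinfS
        · rcases hxT with rfl | ⟨w, hw, rfl⟩
          · exact hinfS
          · rw [hS]
            exact Or.inr ⟨w, (connectedComponentIn_subset _ _ hw).2, rfl⟩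
    rw [hSeq]
    apply isPreconnected_sUnion ∞
    · rintro T (rfl | ⟨zz, hzz, rfl⟩)
      · exact rfl
      · exact Or.inl rfl
    · rintro T (rfl | ⟨zz, hzz, rfl⟩)
      · exact isPreconnected_singleton
      · set C := connectedComponentIn (G \ F) zz with hC
        set A : Set (OnePoint ↥G) :=
          (fun w : ↥G => (w : OnePoint ↥G)) '' (Subtype.val ⁻¹' C) with hA
        have hApre : IsPreconnected A := by
          apply IsPreconnected.image _ _ continuous_coe.continuousOn
          apply Topology.IsInducing.subtypeVal.isPreconnected_image.mp
          rw [Subtype.image_preimage_coe,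
            inter_eq_right.mpr ((connectedComponentIn_subset _ _).trans diff_subset)]
          exact isPreconnected_connectedComponentIn
        have hinfcl : ∞ ∈ closure A := by
          rw [_root_.mem_closure_iff]
          intro o ho hoinf
          by_contra hempty
          rw [not_nonempty_iff_eq_empty] at hempty
          have hK₀ : IsCompact ((((↑) : ↥G → OnePoint ↥G) ⁻¹' o)ᶜ) :=
            ((isOpen_iff_of_mem' hoinf).mp ho).1
          have hsub : Subtype.val ⁻¹' C ⊆ ((((↑) : ↥G → OnePoint ↥G) ⁻¹' o)ᶜ) := by
            intro w hw
            intro hwo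
            exact absurd (⟨(w : OnePoint ↥G), hwo, ⟨w, hw, rfl⟩⟩ : (o ∩ A).Nonempty)
              (by rw [hempty]; exact not_nonempty_empty)
          have hKcpt : IsCompact (Subtype.val '' ((((↑) : ↥G → OnePoint ↥G) ⁻¹' o)ᶜ)) :=
            hK₀.image continuous_subtype_val
          have hCK : C ⊆ Subtype.val '' ((((↑) : ↥G → OnePoint ↥G) ⁻¹' o)ᶜ) := by
            intro p hp
            exact ⟨⟨p, (connectedComponentIn_subset _ _ hp).1⟩, hsub hp, rfl⟩
          rcases h zz hzz with hb | hf
          · exact hb (hKcpt.isBounded.subset hCK)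
          · obtain ⟨p, hp1, hp2⟩ := hf
            have hpK : p ∈ Subtype.val '' ((((↑) : ↥G → OnePoint ↥G) ⁻¹' o)ᶜ) :=
              closure_minimal hCK hKcpt.isClosed hp1
            obtain ⟨w, -, rfl⟩ := hpK
            exact hfrG _ w.2 hp2
        exact hApre.subset_closure (subset_insert _ _)
          (insert_subset hinfcl subset_closure)
end

section
/- Let G ⊆ ℂ be a domain, let f be analytic on G, and let C be a closed subset in G (i.e., C ⊆ G and C is closed in ℂ). Then f is bounded on C if and only if there exists a set C₁ that is a closed subset in G, is an Arakeljan set in G, satisfies C ⊆ C₁, and on which f is bounded. -/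
open Set Metric

/-- A Jordan curve: the image of a continuous injective map from the unit circle into ℂ. -/
def IsJordanCurve (J : Set ℂ) : Prop :=
  ∃ f : ℂ → ℂ, ContinuousOn f (sphere (0 : ℂ) 1) ∧ Set.InjOn f (sphere (0 : ℂ) 1) ∧
    J = f '' (sphere (0 : ℂ) 1)

/-- The topological boundary of `K` is a finite union of pairwise disjoint Jordan curves. -/
def JordanBoundary (K : Set ℂ) : Prop :=
  ∃ (n : ℕ) (J : Fin n → Set ℂ), (∀ i, IsJordanCurve (J i)) ∧
    (Pairwise fun i j => Disjoint (J i) (J j)) ∧ frontier K = ⋃ i, J i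

/-- `g` is a `G`-hole of `F`: a connected component of `G \ F` contained in some
compact subset of `G`. -/
def IsGHole (G F g : Set ℂ) : Prop :=
  (∃ z ∈ G \ F, g = connectedComponentIn (G \ F) z) ∧
  ∃ L : Set ℂ, IsCompact L ∧ L ⊆ G ∧ g ⊆ L

/-- `F` is an Arakeljan set in `G`: it has no `G`-holes, and for every connected compact
`K ⊆ G` whose boundary is a finite union of pairwise disjoint Jordan curves, the union of
all `G`-holes of `F ∪ K` is contained in some compact subset of `G`. -/
def IsArakeljan (G F : Set ℂ) : Prop :=
  (∀ g : Set ℂ, ¬ IsGHole G F g) ∧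
  ∀ K : Set ℂ, IsCompact K → IsConnected K → K ⊆ G → JordanBoundary K →
    ∃ L : Set ℂ, IsCompact L ∧ L ⊆ G ∧ (⋃ g ∈ {g : Set ℂ | IsGHole G (F ∪ K) g}, g) ⊆ L

/-!
Let `U = {z ∈ G : ‖f z‖ < M + 1}`. Covering `C` by the dyadic squares inside `U` (of side at most
`1`) that lie within their own side length of `C` gives a closed set `N ⊆ U` which, near any
point off `C`, is a union of squares of side bounded below. Filling in the `G`-holes of `N` keeps
`‖f‖ ≤ M + 1` by the maximum modulus principle and leaves no holes. Given a compact `K ⊆ G`,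
enlarge it to a finite union `Q` of squares. A hole of `fillHoles G N ∪ Q` would otherwise be a
hole of the filled set, so its closure meets `Q`; near a point of `Q` the set `N ∪ Q` is tiled by
squares of side at least some `2 ^ k`, so distinct holes there contain distinct grid squares of side
`2 ^ k` minus `N ∪ Q`. Hence there are finitely many such holes, and their closures together with
`Q` form the required compact set.
-/

section Holes

theorem closure_connectedComponentIn_inter_subset {X : Type*} [TopologicalSpace X]
    [LocallyConnectedSpace X] {U : Set X} (hU : IsOpen U) (x : X) :
    closure (connectedComponentIn U x) ∩ U ⊆ connectedComponentIn U x := by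
  rintro y ⟨hy, hyU⟩
  obtain ⟨w, hwy, hwx⟩ :=
    mem_closure_iff.mp hy _ hU.connectedComponentIn (mem_connectedComponentIn hyU)
  rw [connectedComponentIn_eq hwx, ← connectedComponentIn_eq hwy]
  exact mem_connectedComponentIn hyU

variable {G F T g c : Set ℂ}

namespace IsGHole

theorem subset_diff (hg : IsGHole G F g) : g ⊆ G \ F := by
  obtain ⟨⟨z, -, rfl⟩, -⟩ := hg
  exact connectedComponentIn_subset _ _

theorem eq_connectedComponentIn (hg : IsGHole G F g) {z : ℂ} (hz : z ∈ g) :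
    g = connectedComponentIn (G \ F) z := by
  obtain ⟨⟨w, -, rfl⟩, -⟩ := hg
  exact connectedComponentIn_eq hz

theorem isOpen (hG : IsOpen G) (hF : IsClosed F) (hg : IsGHole G F g) : IsOpen g := by
  obtain ⟨⟨z, -, rfl⟩, -⟩ := hg
  exact (hG.sdiff hF).connectedComponentIn

theorem isCompact_closure (hg : IsGHole G F g) : IsCompact (closure g) := by
  obtain ⟨-, L, hL, -, hgL⟩ := hg
  exact hL.closure_of_subset hgL

theorem closure_subset (hg : IsGHole G F g) : closure g ⊆ G := by
  obtain ⟨-, L, hL, hLG, hgL⟩ := hg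
  exact (closure_minimal hgL hL.isClosed).trans hLG

theorem closure_inter_subset (hG : IsOpen G) (hF : IsClosed F) (hg : IsGHole G F g) :
    closure g ∩ (G \ F) ⊆ g := by
  obtain ⟨⟨z, -, rfl⟩, -⟩ := hg
  exact closure_connectedComponentIn_inter_subset (hG.sdiff hF) z

theorem frontier_subset (hG : IsOpen G) (hF : IsClosed F) (hg : IsGHole G F g) :
    frontier g ⊆ F := by
  intro p hp
  by_contra hpF
  rw [(hg.isOpen hG hF).frontier_eq] at hp
  exact hp.2 (hg.closure_inter_subset hG hF ⟨hp.1, hg.closure_subset hp.1, hpF⟩)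

/-- The hole is relatively closed in `ℂ \ F`, as its closure lies in `G`. -/
theorem subset_of_isPreconnected (hG : IsOpen G) (hF : IsClosed F) (hg : IsGHole G F g)
    {s : Set ℂ} (hs : IsPreconnected s) (hsF : Disjoint s F) (hsg : (s ∩ g).Nonempty) :
    s ⊆ g :=
  hs.subset_of_closure_inter_subset (hg.isOpen hG hF) hsg fun _ ⟨hpg, hps⟩ =>
    hg.closure_inter_subset hG hF ⟨hpg, hg.closure_subset hpg, disjoint_left.mp hsF hps⟩

theorem norm_le {f : ℂ → ℂ} (hG : IsOpen G) (hf : DifferentiableOn ℂ f G) (hF : IsClosed F)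
    (hg : IsGHole G F g) {M : ℝ} (hM : ∀ z ∈ F, ‖f z‖ ≤ M) : ∀ z ∈ g, ‖f z‖ ≤ M := fun _ hz =>
  Complex.norm_le_of_forall_mem_frontier_norm_le
    (hg.isCompact_closure.isBounded.subset subset_closure)
    ⟨hf.mono (subset_closure.trans hg.closure_subset), hf.continuousOn.mono hg.closure_subset⟩
    (fun w hw => hM w (hg.frontier_subset hG hF hw)) (subset_closure hz)

theorem of_union (hG : IsOpen G) (hF : IsClosed F) (hT : IsClosed T)
    (hc : IsGHole G (F ∪ T) c) (hcT : Disjoint (closure c) T) : IsGHole G F c := by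
  obtain ⟨⟨z, hz, rfl⟩, hL⟩ := id hc
  have hzF : z ∈ G \ F := ⟨hz.1, fun h => hz.2 (Or.inl h)⟩
  refine ⟨⟨z, hzF, subset_antisymm
    (connectedComponentIn_mono _ (sdiff_subset_sdiff_right subset_union_left)) ?_⟩, hL⟩
  refine isPreconnected_connectedComponentIn.subset_of_closure_inter_subset
    (hc.isOpen hG (hF.union hT)) ⟨z, mem_connectedComponentIn hzF, mem_connectedComponentIn hz⟩ ?_
  rintro p ⟨hpc, hp⟩
  have hpGF := connectedComponentIn_subset _ _ hp
  exact hc.closure_inter_subset hG (hF.union hT)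
    ⟨hpc, hpGF.1, fun h => h.elim hpGF.2 (disjoint_left.mp hcT hpc)⟩

theorem exists_isGHole_union_mem {K : Set ℂ} (hc : IsGHole G (F ∪ K) c) (hKT : K ⊆ T) {z : ℂ}
    (hzc : z ∈ c) (hzT : z ∉ T) : ∃ c', IsGHole G (F ∪ T) c' ∧ z ∈ c' := by
  have hzc' := hc.subset_diff hzc
  have hz : z ∈ G \ (F ∪ T) := ⟨hzc'.1, fun h => h.elim (hzc'.2 ∘ Or.inl) hzT⟩
  obtain ⟨-, L, hL, hLG, hcL⟩ := id hc
  refine ⟨_, ⟨⟨z, hz, rfl⟩, L, hL, hLG, ?_⟩, mem_connectedComponentIn hz⟩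
  rw [hc.eq_connectedComponentIn hzc] at hcL
  exact (connectedComponentIn_mono _
    (sdiff_subset_sdiff_right (union_subset_union_right F hKT))).trans hcL

end IsGHole

def fillHoles (G F : Set ℂ) : Set ℂ := F ∪ ⋃₀ {g | IsGHole G F g}

theorem subset_fillHoles : F ⊆ fillHoles G F := subset_union_left

theorem IsGHole.subset_fillHoles (hg : IsGHole G F g) : g ⊆ fillHoles G F :=
  (subset_sUnion_of_mem hg).trans subset_union_right

theorem fillHoles_subset (hFG : F ⊆ G) : fillHoles G F ⊆ G :=
  union_subset hFG <| sUnion_subset fun _ hg => subset_closure.trans (IsGHole.closure_subset hg)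

theorem norm_le_of_mem_fillHoles {f : ℂ → ℂ} (hG : IsOpen G) (hf : DifferentiableOn ℂ f G)
    (hF : IsClosed F) {M : ℝ} (hM : ∀ z ∈ F, ‖f z‖ ≤ M) : ∀ z ∈ fillHoles G F, ‖f z‖ ≤ M := by
  rintro z (hz | ⟨g, hg, hzg⟩)
  · exact hM z hz
  · exact hg.norm_le hG hf hF hM z hzg

theorem isClosed_fillHoles (hG : IsOpen G) (hF : IsClosed F) : IsClosed (fillHoles G F) := by
  refine closure_subset_iff_isClosed.mp fun z hz => ?_
  by_cases hzF : z ∈ F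
  · exact subset_fillHoles hzF
  obtain ⟨ε, hε, hεF⟩ := Metric.isOpen_iff.mp hF.isOpen_compl z hzF
  rw [fillHoles, closure_union, hF.closure_eq] at hz
  obtain ⟨y, hy, g, hg, hyg⟩ :=
    mem_closure_iff.mp (hz.resolve_left hzF) _ isOpen_ball (mem_ball_self hε)
  have hball : ball z ε ⊆ g :=
    hg.subset_of_isPreconnected hG hF (convex_ball z ε).isPreconnected
      (disjoint_left.mpr fun _ h => hεF h) ⟨y, hy, hyg⟩
  exact hg.subset_fillHoles (hball (mem_ball_self hε))

theorem not_isGHole_fillHoles (g : Set ℂ) : ¬ IsGHole G (fillHoles G F) g := by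
  rintro ⟨⟨z, hz, rfl⟩, L, hL, hLG, hgL⟩
  have hzF : z ∈ G \ F := ⟨hz.1, fun h => hz.2 (subset_fillHoles h)⟩
  set h := connectedComponentIn (G \ F) z
  have hh : h ⊆ G \ fillHoles G F := by
    refine fun p hp => ⟨(connectedComponentIn_subset _ _ hp).1, ?_⟩
    rintro (hpF | ⟨w, hw, hpw⟩)
    · exact (connectedComponentIn_subset _ _ hp).2 hpF
    · refine hz.2 (hw.subset_fillHoles ?_)
      rw [hw.eq_connectedComponentIn hpw, ← connectedComponentIn_eq hp]
      exact mem_connectedComponentIn hzF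
  have hhg : h ⊆ connectedComponentIn (G \ fillHoles G F) z :=
    isPreconnected_connectedComponentIn.subset_connectedComponentIn
      (mem_connectedComponentIn hzF) hh
  exact hz.2 (IsGHole.subset_fillHoles ⟨⟨z, hzF, rfl⟩, L, hL, hLG, hhg.trans hgL⟩
    (mem_connectedComponentIn hzF))

/-- The holes of `fillHoles G F ∪ T` can be joined through `G \ (F ∪ T)`: the holes of `F` that
a path might cross are already filled. -/
theorem IsGHole.subset_of_isPreconnected_of_fillHoles (hG : IsOpen G) (hF : IsClosed F)
    (hT : IsClosed T) (hc : IsGHole G (fillHoles G F ∪ T) c) {s : Set ℂ} (hs : IsPreconnected s)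
    (hsFT : Disjoint s (F ∪ T)) (hsc : (s ∩ c).Nonempty) : s ⊆ c := by
  refine hc.subset_of_isPreconnected hG ((isClosed_fillHoles hG hF).union hT) hs ?_ hsc
  obtain ⟨z, hzs, hzc⟩ := hsc
  refine disjoint_union_right.mpr ⟨disjoint_union_right.mpr ⟨(disjoint_union_right.mp hsFT).1,
    disjoint_sUnion_right.mpr fun h hh => ?_⟩, (disjoint_union_right.mp hsFT).2⟩
  refine disjoint_left.mpr fun p hps hph =>
    (hc.subset_diff hzc).2 (Or.inl (hh.subset_fillHoles ?_))
  exact hh.subset_of_isPreconnected hG hF hs (disjoint_union_right.mp hsFT).1 ⟨p, hps, hph⟩ hzs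

theorem pairwiseDisjoint_isGHole : {g | IsGHole G F g}.PairwiseDisjoint id := by
  intro g hg g' hg' hne
  refine disjoint_left.mpr fun z hz hz' => hne ?_
  rw [IsGHole.eq_connectedComponentIn hg hz, IsGHole.eq_connectedComponentIn hg' hz']

end Holes

section Grid

def dyadicInterval (k n : ℤ) : Set ℝ := Icc (n * 2 ^ k) ((n + 1) * 2 ^ k)

def dyadicSquare (k : ℤ) (n : ℤ × ℤ) : Set ℂ := dyadicInterval k n.1 ×ℂ dyadicInterval k n.2

variable {k j : ℤ} {n m : ℤ × ℤ}

theorem dyadicInterval_subset {a b : ℤ} (hkj : k ≤ j) {x : ℝ}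
    (hx : x ∈ Ioo (a * (2 : ℝ) ^ k) ((a + 1) * 2 ^ k)) (hx' : x ∈ dyadicInterval j b) :
    dyadicInterval k a ⊆ dyadicInterval j b := by
  obtain ⟨d, rfl⟩ := Int.le.dest hkj
  have hk : (0 : ℝ) < 2 ^ k := by positivity
  have hj : (2 : ℝ) ^ (k + d) = 2 ^ d * 2 ^ k := by
    rw [zpow_add₀ two_ne_zero, zpow_natCast, mul_comm]
  simp only [dyadicInterval, hj, ← mul_assoc] at hx' ⊢
  have h₁ : b * 2 ^ d < a + 1 := by
    exact_mod_cast lt_of_mul_lt_mul_right (hx'.1.trans_lt hx.2) hk.le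
  have h₂ : a < (b + 1) * 2 ^ d := by
    exact_mod_cast lt_of_mul_lt_mul_right (hx.1.trans_le hx'.2) hk.le
  have h₁' : (b * 2 ^ d : ℝ) ≤ a := by exact_mod_cast Int.lt_add_one_iff.mp h₁
  have h₂' : (a + 1 : ℝ) ≤ (b + 1) * 2 ^ d := by exact_mod_cast Int.add_one_le_iff.mpr h₂
  exact Icc_subset_Icc (by gcongr) (by gcongr)

theorem interior_dyadicSquare :
    interior (dyadicSquare k n) = Ioo (n.1 * (2 : ℝ) ^ k) ((n.1 + 1) * 2 ^ k) ×ℂ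
      Ioo (n.2 * (2 : ℝ) ^ k) ((n.2 + 1) * 2 ^ k) := by
  simp only [dyadicSquare, dyadicInterval, Complex.interior_reProdIm, interior_Icc]

theorem dyadicSquare_subset (hkj : k ≤ j)
    (h : (interior (dyadicSquare k n) ∩ dyadicSquare j m).Nonempty) :
    dyadicSquare k n ⊆ dyadicSquare j m := by
  obtain ⟨z, hz, hz'⟩ := h
  rw [interior_dyadicSquare] at hz
  exact Complex.reProdIm_subset_iff'.mpr (Or.inl ⟨dyadicInterval_subset hkj hz.1 hz'.1,
    dyadicInterval_subset hkj hz.2 hz'.2⟩)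

theorem isCompact_dyadicSquare : IsCompact (dyadicSquare k n) :=
  isCompact_Icc.reProdIm isCompact_Icc

theorem isPreconnected_interior_dyadicSquare : IsPreconnected (interior (dyadicSquare k n)) := by
  rw [interior_dyadicSquare]
  exact ((convex_Ioo _ _).linear_preimage Complex.reLm).inter
    ((convex_Ioo _ _).linear_preimage Complex.imLm) |>.isPreconnected

theorem dyadicSquare_subset_closure_interior :
    dyadicSquare k n ⊆ closure (interior (dyadicSquare k n)) := by
  have hk : (0 : ℝ) < 2 ^ k := by positivity
  rw [interior_dyadicSquare, Complex.closure_reProdIm, closure_Ioo (by nlinarith),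
    closure_Ioo (by nlinarith)]
  rfl

theorem mem_dyadicSquare_floor (k : ℤ) (z : ℂ) :
    z ∈ dyadicSquare k (⌊z.re / 2 ^ k⌋, ⌊z.im / 2 ^ k⌋) := by
  have hk : (0 : ℝ) < 2 ^ k := by positivity
  have key (x : ℝ) : x ∈ dyadicInterval k ⌊x / 2 ^ k⌋ := by
    rw [dyadicInterval, mem_Icc, ← le_div_iff₀ hk, ← div_le_iff₀ hk]
    exact ⟨Int.floor_le _, (Int.lt_floor_add_one _).le⟩
  exact ⟨key z.re, key z.im⟩

theorem dist_le_of_mem_dyadicSquare {z w : ℂ} (hz : z ∈ dyadicSquare k n)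
    (hw : w ∈ dyadicSquare k n) : dist z w ≤ 2 * 2 ^ k := by
  have key {x y : ℝ} {a : ℤ} (hx : x ∈ dyadicInterval k a) (hy : y ∈ dyadicInterval k a) :
      |x - y| ≤ 2 ^ k := by
    rw [abs_sub_le_iff]; constructor <;> nlinarith [hx.1, hx.2, hy.1, hy.2]
  rw [Complex.dist_eq]
  calc ‖z - w‖ ≤ |(z - w).re| + |(z - w).im| := Complex.norm_le_abs_re_add_abs_im _
    _ ≤ 2 ^ k + 2 ^ k := add_le_add (key hz.1 hw.1) (key hz.2 hw.2)
    _ = 2 * 2 ^ k := by ring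

theorem locallyFinite_dyadicSquare (k : ℤ) : LocallyFinite (dyadicSquare k) := by
  have hk : (0 : ℝ) < 2 ^ k := by positivity
  have h₁ : LocallyFinite (dyadicInterval k) :=
    locallyFinite_Icc_of_tendsto (tendsto_intCast_atTop_atTop.atTop_mul_const hk)
      ((Filter.tendsto_atBot_add_const_right _ 1
        (tendsto_intCast_atBot_iff.mpr Filter.tendsto_id)).atBot_mul_const hk)
  intro z
  obtain ⟨s, hs, hsfin⟩ := h₁ z.re
  obtain ⟨t, ht, htfin⟩ := h₁ z.im
  refine ⟨s ×ℂ t, ?_, (hsfin.prod htfin).subset ?_⟩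
  · exact Filter.inter_mem (Complex.continuous_re.continuousAt hs)
      (Complex.continuous_im.continuousAt ht)
  · rintro n ⟨w, hw, hw'⟩
    exact ⟨⟨w.re, hw.1, hw'.1⟩, ⟨w.im, hw.2, hw'.2⟩⟩

theorem exists_two_mul_zpow_le (k₀ : ℤ) {a : ℝ} (ha : 0 < a) :
    ∃ k ≤ k₀, 2 * (2 : ℝ) ^ k ≤ a := by
  obtain ⟨k, hk, -⟩ := exists_mem_Ioc_zpow (half_pos ha) one_lt_two
  refine ⟨min k k₀, min_le_right _ _, ?_⟩
  have := zpow_le_zpow_right₀ (by norm_num : (1 : ℝ) ≤ 2) (min_le_left k k₀)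
  linarith

end Grid

section Tiling

/-- The upper bound `1` on the sides makes a tiled set locally a finite union of squares. -/
def IsTiledOn (k : ℤ) (S V : Set ℂ) : Prop :=
  ∀ z ∈ S ∩ V, ∃ j ∈ Icc k 0, ∃ n, z ∈ dyadicSquare j n ∧ dyadicSquare j n ⊆ S

def IsLocallyDyadic (S : Set ℂ) : Prop :=
  ∀ q, ∃ ε > 0, ∃ k, IsTiledOn k S (ball q ε)

variable {k k' : ℤ} {S T V V' : Set ℂ} {n : ℤ × ℤ}

theorem IsTiledOn.mono (h : IsTiledOn k S V) (hk : k' ≤ k) (hV : V' ⊆ V) : IsTiledOn k' S V' :=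
  fun z hz => let ⟨j, hj, hj'⟩ := h z ⟨hz.1, hV hz.2⟩; ⟨j, ⟨hk.trans hj.1, hj.2⟩, hj'⟩

theorem IsTiledOn.union (hS : IsTiledOn k S V) (hT : IsTiledOn k T V) :
    IsTiledOn k (S ∪ T) V := by
  rintro z ⟨hz | hz, hzV⟩
  · obtain ⟨j, hj, n, hzn, hn⟩ := hS z ⟨hz, hzV⟩
    exact ⟨j, hj, n, hzn, hn.trans subset_union_left⟩
  · obtain ⟨j, hj, n, hzn, hn⟩ := hT z ⟨hz, hzV⟩
    exact ⟨j, hj, n, hzn, hn.trans subset_union_right⟩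

theorem IsLocallyDyadic.union (hS : IsLocallyDyadic S) (hT : IsLocallyDyadic T) :
    IsLocallyDyadic (S ∪ T) := by
  intro q
  obtain ⟨ε, hε, k, hk⟩ := hS q
  obtain ⟨δ, hδ, l, hl⟩ := hT q
  exact ⟨min ε δ, lt_min hε hδ, min k l, (hk.mono (min_le_left k l)
    (ball_subset_ball (min_le_left ε δ))).union (hl.mono (min_le_right k l)
    (ball_subset_ball (min_le_right ε δ)))⟩

theorem isTiledOn_of_ball_subset {q : ℂ} {ε : ℝ} (hε : 0 < ε) (h : ball q ε ⊆ S) :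
    ∃ k, IsTiledOn k S (ball q (ε / 2)) := by
  obtain ⟨k, hk, hkε⟩ := exists_two_mul_zpow_le 0 (half_pos hε)
  refine ⟨k, fun z hz => ⟨k, ⟨le_rfl, hk⟩, _, mem_dyadicSquare_floor k z, fun p hp => h ?_⟩⟩
  have := dist_le_of_mem_dyadicSquare hp (mem_dyadicSquare_floor k z)
  have := dist_triangle p z q
  have := mem_ball.mp hz.2
  exact mem_ball.mpr (by linarith)

theorem IsTiledOn.subset_or_disjoint (h : IsTiledOn k S V) (hV : dyadicSquare k n ⊆ V) :
    dyadicSquare k n ⊆ S ∨ Disjoint (interior (dyadicSquare k n)) S := by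
  refine or_iff_not_imp_right.mpr fun hS => ?_
  obtain ⟨z, hzP, hzS⟩ := not_disjoint_iff.mp hS
  obtain ⟨j, hj, m, hzm, hm⟩ := h z ⟨hzS, hV (interior_subset hzP)⟩
  exact (dyadicSquare_subset hj.1 ⟨z, hzP, hzm⟩).trans hm

theorem IsTiledOn.isPreconnected_diff (h : IsTiledOn k S V) (hV : dyadicSquare k n ⊆ V) :
    IsPreconnected (dyadicSquare k n \ S) := by
  rcases h.subset_or_disjoint hV with hS | hS
  · rw [sdiff_eq_empty.mpr hS]
    exact isPreconnected_empty
  · exact isPreconnected_interior_dyadicSquare.subset_closure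
      (subset_sdiff.mpr ⟨interior_subset, hS⟩)
      (sdiff_subset.trans dyadicSquare_subset_closure_interior)

theorem IsLocallyDyadic.isClosed (hS : IsLocallyDyadic S) : IsClosed S := by
  refine closure_subset_iff_isClosed.mp fun q hq => ?_
  obtain ⟨ε, hε, k, hk⟩ := hS q
  set F := ⋃ j ∈ Icc k 0, ⋃ n : {n // dyadicSquare j n ⊆ S}, dyadicSquare j n
  have hF : IsClosed F := (finite_Icc k 0).isClosed_biUnion fun j _ =>
    ((locallyFinite_dyadicSquare j).comp_injective Subtype.val_injective).isClosed_iUnion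
      fun _ => isCompact_dyadicSquare.isClosed
  have hSF : S ∩ ball q ε ⊆ F := fun z hz => by
    obtain ⟨j, hj, n, hzn, hn⟩ := hk z hz
    exact mem_biUnion hj (mem_iUnion.mpr ⟨⟨n, hn⟩, hzn⟩)
  have hFS : F ⊆ S := iUnion₂_subset fun j _ => iUnion_subset fun n => n.2
  have hq' : q ∈ closure (S ∩ ball q ε) := by
    rw [inter_comm]
    exact isOpen_ball.inter_closure ⟨mem_ball_self hε, hq⟩
  exact hFS (closure_minimal hSF hF hq')

end Tiling

section Finiteness

variable {G N Q : Set ℂ}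

/-- Pigeonhole: the dyadic square containing a chosen point of each set lies, minus `S`, inside
that set, so distinct sets get distinct squares, and only finitely many squares are near `q`. -/
theorem finite_of_isTiledOn {S : Set ℂ} {q : ℂ} {ε : ℝ} {k : ℤ} (hε : 0 < ε)
    (hS : IsTiledOn k S (ball q ε)) {𝒞 : Set (Set ℂ)} (hdisj : 𝒞.PairwiseDisjoint id)
    (hcS : ∀ c ∈ 𝒞, Disjoint c S)
    (hjoin : ∀ c ∈ 𝒞, ∀ s, IsPreconnected s → Disjoint s S → (s ∩ c).Nonempty → s ⊆ c) :
    {c ∈ 𝒞 | (c ∩ ball q (ε / 2)).Nonempty}.Finite := by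
  obtain ⟨l, hlk, hl⟩ := exists_two_mul_zpow_le k (half_pos hε)
  have hS' := hS.mono hlk subset_rfl
  choose! w hwc hwq using fun c (hc : c ∈ {c ∈ 𝒞 | (c ∩ ball q (ε / 2)).Nonempty}) => hc.2
  set idx : Set ℂ → ℤ × ℤ := fun c => (⌊(w c).re / 2 ^ l⌋, ⌊(w c).im / 2 ^ l⌋)
  have hw (c : Set ℂ) : w c ∈ dyadicSquare l (idx c) := mem_dyadicSquare_floor l (w c)
  have hball {c} (hc : c ∈ {c ∈ 𝒞 | (c ∩ ball q (ε / 2)).Nonempty}) :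
      dyadicSquare l (idx c) ⊆ ball q ε := fun p hp => by
    have := dist_le_of_mem_dyadicSquare hp (hw c)
    have := dist_triangle p (w c) q
    have := mem_ball.mp (hwq c hc)
    exact mem_ball.mpr (by linarith)
  have hfin : {n | (dyadicSquare l n ∩ closedBall q (ε / 2)).Nonempty}.Finite :=
    (locallyFinite_dyadicSquare l).finite_nonempty_inter_compact (isCompact_closedBall q _)
  refine Finite.of_finite_image (f := idx) (hfin.subset ?_) ?_
  · rintro _ ⟨c, hc, rfl⟩
    exact ⟨w c, hw c, ball_subset_closedBall (hwq c hc)⟩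
  intro c hc c' hc' hidx
  have hsub : dyadicSquare l (idx c) \ S ⊆ c :=
    hjoin c hc.1 _ (hS'.isPreconnected_diff (hball hc)) disjoint_sdiff_left
      ⟨w c, ⟨hw c, disjoint_left.mp (hcS c hc.1) (hwc c hc)⟩, hwc c hc⟩
  have hw' : w c' ∈ c := hsub ⟨hidx ▸ hw c', disjoint_left.mp (hcS c' hc'.1) (hwc c' hc')⟩
  by_contra hne
  exact disjoint_left.mp (hdisj hc.1 hc'.1 hne) hw' (hwc c' hc')

/-- A hole of `fillHoles G N ∪ Q` is not a hole of `fillHoles G N`, so its closure reaches `Q`;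
near each point of `Q` the set `N ∪ Q` is tiled, which leaves room for only finitely many holes. -/
theorem finite_isGHole_fillHoles_union (hG : IsOpen G) (hN : IsLocallyDyadic N)
    (hQ : IsCompact Q) (hQ' : IsLocallyDyadic Q) :
    {c | IsGHole G (fillHoles G N ∪ Q) c}.Finite := by
  have hNc := hN.isClosed
  have hmeet (c) (hc : IsGHole G (fillHoles G N ∪ Q) c) : (closure c ∩ Q).Nonempty :=
    not_disjoint_iff_nonempty_inter.mp fun h =>
      not_isGHole_fillHoles _ (hc.of_union hG (isClosed_fillHoles hG hNc) hQ.isClosed h)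
  choose ε hε k hk using (hN.union hQ')
  have hloc (q : ℂ) : {c ∈ {c | IsGHole G (fillHoles G N ∪ Q) c} |
      (c ∩ ball q (ε q / 2)).Nonempty}.Finite := by
    refine finite_of_isTiledOn (hε q) (hk q) pairwiseDisjoint_isGHole (fun c hc => ?_)
      fun c hc s hs hsS hsc =>
        hc.subset_of_isPreconnected_of_fillHoles hG hNc hQ.isClosed hs hsS hsc
    refine disjoint_left.mpr fun z hzc hz => (hc.subset_diff hzc).2 ?_
    exact hz.elim (fun h => Or.inl (subset_fillHoles h)) Or.inr
  obtain ⟨t, -, hQt⟩ := hQ.elim_nhds_subcover (fun q => ball q (ε q / 2))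
    fun q _ => ball_mem_nhds q (half_pos (hε q))
  refine (t.finite_toSet.biUnion fun q _ => hloc q).subset fun c hc => ?_
  obtain ⟨p, hpc, hpQ⟩ := hmeet c hc
  obtain ⟨q, hqt, hpq⟩ := mem_iUnion₂.mp (hQt hpQ)
  obtain ⟨z, hz, hzc⟩ := mem_closure_iff.mp hpc _ isOpen_ball hpq
  exact mem_biUnion hqt ⟨hc, z, hzc, hz⟩

end Finiteness

theorem exists_isCompact_isLocallyDyadic {G K : Set ℂ} (hG : IsOpen G) (hK : IsCompact K)
    (hKG : K ⊆ G) : ∃ Q, IsCompact Q ∧ K ⊆ Q ∧ Q ⊆ G ∧ IsLocallyDyadic Q := by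
  obtain ⟨δ, hδ, hδG⟩ := hK.exists_cthickening_subset_open hG hKG
  obtain ⟨k, hk, hkδ⟩ := exists_two_mul_zpow_le 0 hδ
  set I := {n | (dyadicSquare k n ∩ K).Nonempty}
  have hI : I.Finite := (locallyFinite_dyadicSquare k).finite_nonempty_inter_compact hK
  refine ⟨⋃ n ∈ I, dyadicSquare k n, hI.isCompact_biUnion fun _ _ => isCompact_dyadicSquare,
    fun z hz => mem_biUnion ⟨z, mem_dyadicSquare_floor k z, hz⟩ (mem_dyadicSquare_floor k z),
    iUnion₂_subset fun n ⟨x, hxn, hxK⟩ p hp => hδG ?_,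
    fun q => ⟨1, one_pos, k, fun z ⟨hz, _⟩ => ?_⟩⟩
  · exact mem_cthickening_of_dist_le p x δ K hxK
      ((dist_le_of_mem_dyadicSquare hp hxn).trans hkδ)
  · obtain ⟨n, hn, hzn⟩ := mem_iUnion₂.mp hz
    exact ⟨k, ⟨le_rfl, hk⟩, n, hzn, subset_biUnion_of_mem (u := fun n => dyadicSquare k n) hn⟩

theorem isArakeljan_fillHoles {G N : Set ℂ} (hG : IsOpen G) (hN : IsLocallyDyadic N) :
    IsArakeljan G (fillHoles G N) := by
  refine ⟨not_isGHole_fillHoles, fun K hK _ hKG _ => ?_⟩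
  obtain ⟨Q, hQ, hKQ, hQG, hQ'⟩ := exists_isCompact_isLocallyDyadic hG hK hKG
  have hfin := finite_isGHole_fillHoles_union hG hN hQ hQ'
  refine ⟨Q ∪ ⋃ c ∈ {c | IsGHole G (fillHoles G N ∪ Q) c}, closure c,
    hQ.union (hfin.isCompact_biUnion fun c hc => hc.isCompact_closure),
    union_subset hQG (iUnion₂_subset fun c hc => hc.closure_subset), ?_⟩
  intro z hz
  obtain ⟨g, hg, hzg⟩ := mem_iUnion₂.mp hz
  by_cases hzQ : z ∈ Q
  · exact Or.inl hzQ
  · obtain ⟨c, hc, hzc⟩ := IsGHole.exists_isGHole_union_mem hg hKQ hzg hzQ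
    exact Or.inr (mem_biUnion hc (subset_closure hzc))

section Construction

def dyadicNbhd (C U : Set ℂ) : Set ℂ :=
  {z | ∃ k ≤ (0 : ℤ), ∃ n, z ∈ dyadicSquare k n ∧ dyadicSquare k n ⊆ U ∧
    ∃ x ∈ dyadicSquare k n, ∃ y ∈ C, dist x y ≤ 2 ^ k}

variable {C U : Set ℂ}

theorem dyadicNbhd_subset : dyadicNbhd C U ⊆ U := fun _ ⟨_, _, _, hz, hU, _⟩ => hU hz

theorem exists_ball_subset_dyadicNbhd (hU : IsOpen U) (hCU : C ⊆ U) {y : ℂ} (hy : y ∈ C) :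
    ∃ t > 0, ball y t ⊆ dyadicNbhd C U := by
  obtain ⟨r, hr, hrU⟩ := Metric.isOpen_iff.mp hU y (hCU hy)
  set t := min (r / 5) (1 / 2)
  have ht : 0 < t := lt_min (by positivity) (by norm_num)
  obtain ⟨m, hm, hm'⟩ := exists_mem_Ioc_zpow ht one_lt_two
  have h2m : (2 : ℝ) ^ (m + 1) = 2 * 2 ^ m := by rw [zpow_add_one₀ two_ne_zero, mul_comm]
  have htr : t ≤ r / 5 := min_le_left _ _
  have ht1 : t ≤ 1 / 2 := min_le_right _ _
  refine ⟨t, ht, fun z hz => ⟨m + 1, ?_, _, mem_dyadicSquare_floor _ z, fun p hp => hrU ?_,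
    z, mem_dyadicSquare_floor _ z, y, hy, by linarith [mem_ball.mp hz]⟩⟩
  · exact ((zpow_lt_one_iff_right₀ (one_lt_two : (1 : ℝ) < 2)).mp (by linarith)).le
  · have := dist_le_of_mem_dyadicSquare hp (mem_dyadicSquare_floor _ z)
    have := dist_triangle p z y
    have := mem_ball.mp hz
    exact mem_ball.mpr (by linarith)

theorem subset_dyadicNbhd (hU : IsOpen U) (hCU : C ⊆ U) : C ⊆ dyadicNbhd C U := fun _ hy =>
  let ⟨_, ht, htN⟩ := exists_ball_subset_dyadicNbhd hU hCU hy
  htN (mem_ball_self ht)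

/-- Away from `C` the squares of `dyadicNbhd C U` cannot be small, as each lies within its side
length of `C`. -/
theorem isTiledOn_dyadicNbhd (hC : IsClosed C) {q : ℂ} (hq : q ∉ C) :
    ∃ ε > 0, ∃ k, IsTiledOn k (dyadicNbhd C U) (ball q ε) := by
  obtain ⟨r, hr, hrC⟩ := Metric.isOpen_iff.mp hC.isOpen_compl q hq
  obtain ⟨k, -, hk⟩ := exists_two_mul_zpow_le 0 (by positivity : 0 < r / 3)
  refine ⟨r / 2, half_pos hr, k, fun z ⟨⟨j, hj, n, hzn, hnU, x, hxn, y, hyC, hxy⟩, hzq⟩ => ?_⟩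
  have hqy : r ≤ dist q y := not_lt.mp fun h => hrC (mem_ball_comm.mp (mem_ball.mpr h)) hyC
  have := dist_le_of_mem_dyadicSquare hzn hxn
  have := dist_triangle4 q z x y
  have := mem_ball'.mp hzq
  have hkj : k < j := (zpow_lt_zpow_iff_right₀ (one_lt_two : (1 : ℝ) < 2)).mp (by linarith)
  exact ⟨j, ⟨hkj.le, hj⟩, n, hzn, fun p hp => ⟨j, hj, n, hp, hnU, x, hxn, y, hyC, hxy⟩⟩

theorem isLocallyDyadic_dyadicNbhd (hC : IsClosed C) (hU : IsOpen U) (hCU : C ⊆ U) :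
    IsLocallyDyadic (dyadicNbhd C U) := by
  intro q
  by_cases hq : q ∈ C
  · obtain ⟨t, ht, htN⟩ := exists_ball_subset_dyadicNbhd hU hCU hq
    exact ⟨t / 2, half_pos ht, isTiledOn_of_ball_subset ht htN⟩
  · exact isTiledOn_dyadicNbhd hC hq

end Construction

theorem bounded_iff_exists_arakeljan_superset_general
    (G : Set ℂ) (hGopen : IsOpen G)
    (f : ℂ → ℂ) (hf : DifferentiableOn ℂ f G)
    (C : Set ℂ) (hCG : C ⊆ G) (hCclosed : IsClosed C) :
    (∃ M : ℝ, ∀ z ∈ C, ‖f z‖ ≤ M) ↔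
      ∃ C₁ : Set ℂ, C₁ ⊆ G ∧ IsClosed C₁ ∧ IsArakeljan G C₁ ∧ C ⊆ C₁ ∧
        ∃ M : ℝ, ∀ z ∈ C₁, ‖f z‖ ≤ M := by
  refine ⟨fun ⟨M, hM⟩ => ?_, fun ⟨_, _, _, _, hCC₁, M, hM⟩ => ⟨M, fun z hz => hM z (hCC₁ hz)⟩⟩
  set U := G ∩ f ⁻¹' {w | ‖w‖ < M + 1}
  have hU : IsOpen U :=
    hf.continuousOn.isOpen_inter_preimage hGopen (isOpen_lt continuous_norm continuous_const)
  have hCU : C ⊆ U := fun z hz => ⟨hCG hz, by simpa using (hM z hz).trans_lt (lt_add_one M)⟩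
  have hN := isLocallyDyadic_dyadicNbhd hCclosed hU hCU
  have hNU : dyadicNbhd C U ⊆ U := dyadicNbhd_subset
  exact ⟨fillHoles G (dyadicNbhd C U), fillHoles_subset (hNU.trans inter_subset_left),
    isClosed_fillHoles hGopen hN.isClosed, isArakeljan_fillHoles hGopen hN,
    (subset_dyadicNbhd hU hCU).trans subset_fillHoles, M + 1,
    norm_le_of_mem_fillHoles hGopen hf hN.isClosed fun z hz => (hNU hz).2.le⟩

/-- Let `f` be analytic on a domain `G` and `C ⊆ G` closed in `ℂ`. Then
`f` is bounded on `C` iff there is a set `C₁ ⊆ G`, closed in `ℂ`, which is an Arakeljan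
set in `G`, contains `C`, and on which `f` is bounded. -/
theorem bounded_iff_exists_arakeljan_superset
    (G : Set ℂ) (hGopen : IsOpen G) (hGconn : IsConnected G)
    (f : ℂ → ℂ) (hf : DifferentiableOn ℂ f G)
    (C : Set ℂ) (hCG : C ⊆ G) (hCclosed : IsClosed C) :
    (∃ M : ℝ, ∀ z ∈ C, ‖f z‖ ≤ M) ↔
      ∃ C₁ : Set ℂ, C₁ ⊆ G ∧ IsClosed C₁ ∧ IsArakeljan G C₁ ∧ C ⊆ C₁ ∧
        ∃ M : ℝ, ∀ z ∈ C₁, ‖f z‖ ≤ M :=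
  bounded_iff_exists_arakeljan_superset_general G hGopen f hf C hCG hCclosed
end

section
/- Let f be an entire function and let C ⊆ ℂ be a closed set with C ≠ ℂ. Then f is bounded on C if and only if there exists a closed Arakeljan set C₁ in ℂ with C ⊆ C₁ such that f is bounded on C₁. -/
open Set Metric

/-- A closed set `F ⊆ ℂ` is an Arakeljan set in `ℂ`: every connected component of `ℂ \ F`
is unbounded, and for every connected compact `K` whose boundary is a finite union of
pairwise disjoint Jordan curves, the union of all bounded connected components of
`ℂ \ (F ∪ K)` is bounded. -/
def IsArakeljanC (F : Set ℂ) : Prop :=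
  (∀ z ∈ Fᶜ, ¬ Bornology.IsBounded (connectedComponentIn Fᶜ z)) ∧
  ∀ K : Set ℂ, IsCompact K → IsConnected K → JordanBoundary K →
    Bornology.IsBounded (⋃ g ∈ {g : Set ℂ |
      (∃ z ∈ (F ∪ K)ᶜ, g = connectedComponentIn (F ∪ K)ᶜ z) ∧ Bornology.IsBounded g}, g)

/-!
If `‖f‖ ≤ M` on `C` with `M ≥ 0`, the closed sublevel set `F = {z | ‖f z‖ ≤ M} ⊇ C` is itself an
Arakeljan set. By the maximum principle every bounded component of `ℂ \ (F ∪ K)` has boundary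
points in `K`; with `K = ∅` this shows that `ℂ \ F` has no bounded components. For compact
`K ⊆ ball 0 r`, a bounded component not contained in `closedBall 0 r` therefore meets the circle
`|z| = r`. Along this circle `t ↦ |f(r e^{it})|² - M²` is real analytic, so it has finitely many
zeros in `[0, 2π]` unless it vanishes identically; each zero-free arc on which it is positive lies
in a single component, so only finitely many components meet the circle. The converse direction
is trivial.
-/

open Bornology

theorem IsOpen.frontier_connectedComponentIn_subset {X : Type*} [TopologicalSpace X]
    [LocallyConnectedSpace X] {O : Set X} (hO : IsOpen O) (z : X) :
    frontier (connectedComponentIn O z) ⊆ Oᶜ := by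
  intro x hx hxO
  obtain ⟨y, hyx, hyz⟩ := mem_closure_iff_nhds.mp hx.1 _
    (connectedComponentIn_mem_nhds (hO.mem_nhds hxO))
  rw [hO.connectedComponentIn.frontier_eq, connectedComponentIn_eq hyz,
    ← connectedComponentIn_eq hyx] at hx
  exact hx.2 (mem_connectedComponentIn hxO)

theorem IsPreconnected.inter_sphere_nonempty {E : Type*} [SeminormedAddCommGroup E] {s : Set E}
    (hs : IsPreconnected s) {c : E} {r : ℝ} (h_ball : (s ∩ ball c r).Nonempty)
    (h_out : ¬ s ⊆ closedBall c r) : (s ∩ sphere c r).Nonempty := by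
  obtain ⟨x, hxs, hx⟩ := h_ball
  obtain ⟨y, hys, hy⟩ := not_subset.mp h_out
  obtain ⟨w, hws, hw⟩ := (hs.image _ (continuous_id.dist continuous_const).continuousOn).Icc_subset
    (mem_image_of_mem _ hxs) (mem_image_of_mem _ hys)
    ⟨(mem_ball.mp hx).le, (not_le.mp (mem_closedBall.not.mp hy)).le⟩
  exact ⟨w, hws, hw⟩

theorem ContinuousOn.pos_of_forall_ne_zero {h : ℝ → ℝ} {s t : ℝ} (hh : ContinuousOn h (Icc s t))
    (hs : 0 < h s) (hne : ∀ u ∈ Icc s t, h u ≠ 0) : ∀ u ∈ Icc s t, 0 < h u := by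
  intro u hu
  by_contra! hu0
  obtain ⟨v, hv, hv0⟩ := intermediate_value_Icc' hu.1 (hh.mono (Icc_subset_Icc_right hu.2))
    ⟨hu0, hs.le⟩
  exact hne v (Icc_subset_Icc_right hu.2 hv) hv0

theorem finite_image_setOf_pos_of_finite_zeros {β : Type*} {h : ℝ → ℝ} {a b : ℝ}
    (hh : ContinuousOn h (Icc a b)) (hZ : {t ∈ Icc a b | h t = 0}.Finite) {Φ : ℝ → β}
    (hΦ : ∀ s t, s ≤ t → (∀ u ∈ Icc s t, 0 < h u) → Φ s = Φ t) :
    (Φ '' {t ∈ Icc a b | 0 < h t}).Finite := by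
  set S := {t ∈ Icc a b | 0 < h t}
  set Z := insert b {t ∈ Icc a b | h t = 0}
  -- `ζ t` is the first zero of `h` at or after `t`, or `b` if there is none
  set ζ : ℝ → ℝ := fun t => sInf (Ici t ∩ Z)
  have hζ : ∀ t ∈ Icc a b, ζ t ∈ Ici t ∩ Z ∧ ∀ u ∈ Ici t ∩ Z, ζ t ≤ u := fun t ht =>
    have hbdd : BddBelow (Ici t ∩ Z) := ⟨t, fun _ hu => hu.1⟩
    ⟨(isClosed_Ici.inter (hZ.insert b).isClosed).csInf_mem ⟨b, ht.2, mem_insert b _⟩ hbdd,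
      fun _ hu => csInf_le hbdd hu⟩
  have h_fiber : ∀ t₁ ∈ S, ∀ t₂ ∈ S, t₁ ≤ t₂ → ζ t₁ = ζ t₂ → Φ t₁ = Φ t₂ := by
    rintro t₁ ⟨ht₁, ht₁_pos⟩ t₂ ⟨ht₂, ht₂_pos⟩ hle hζeq
    refine hΦ t₁ t₂ hle ((hh.mono (Icc_subset_Icc ht₁.1 ht₂.2)).pos_of_forall_ne_zero ht₁_pos ?_)
    intro u hu hu0
    have hζu : ζ t₁ ≤ u :=
      (hζ t₁ ht₁).2 u ⟨hu.1, mem_insert_of_mem _ ⟨⟨ht₁.1.trans hu.1, hu.2.trans ht₂.2⟩, hu0⟩⟩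
    have hut₂ : u = t₂ := le_antisymm hu.2 ((hζeq ▸ (hζ t₂ ht₂).1.1).trans hζu)
    exact ht₂_pos.ne' (hut₂ ▸ hu0)
  have h_sub : ∀ z, (Φ '' {t ∈ S | ζ t = z}).Subsingleton := by
    rintro z _ ⟨t₁, ⟨ht₁, rfl⟩, rfl⟩ _ ⟨t₂, ⟨ht₂, hζ₂⟩, rfl⟩
    rcases le_total t₁ t₂ with hle | hle
    · exact h_fiber t₁ ht₁ t₂ ht₂ hle hζ₂.symm
    · exact (h_fiber t₂ ht₂ t₁ ht₁ hle hζ₂).symm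
  refine ((hZ.insert b).biUnion fun z _ => (h_sub z).finite).subset ?_
  rintro _ ⟨t, ht, rfl⟩
  exact mem_biUnion (hζ t ht.1).1.2 ⟨t, ⟨ht, rfl⟩, rfl⟩

theorem finite_image_setOf_pos_of_analyticOnNhd {β : Type*} {h : ℝ → ℝ} {a b : ℝ}
    (hh : AnalyticOnNhd ℝ h (Icc a b)) {Φ : ℝ → β}
    (hΦ : ∀ s t, s ≤ t → (∀ u ∈ Icc s t, 0 < h u) → Φ s = Φ t) :
    (Φ '' {t ∈ Icc a b | 0 < h t}).Finite := by
  rcases hh.eqOn_zero_or_eventually_ne_zero_of_preconnected isPreconnected_Icc with h0 | hne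
  · convert finite_empty
    refine image_eq_empty.mpr (eq_empty_of_forall_notMem fun t ht => ?_)
    exact ht.2.ne' (h0 ht.1)
  · refine finite_image_setOf_pos_of_finite_zeros hh.continuousOn ?_ hΦ
    convert isCompact_Icc.finite_sdiff_of_mem_codiscreteWithin hne using 1
    ext t
    simp

theorem analyticOnNhd_normSq_comp_circleMap {f : ℂ → ℂ} (hf : Differentiable ℂ f) (r : ℝ) :
    AnalyticOnNhd ℝ (fun t => Complex.normSq (f (circleMap 0 r t))) univ := by
  intro t _
  have hg : AnalyticAt ℝ (fun t => f (circleMap 0 r t)) t :=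
    (hf.analyticAt _).restrictScalars.comp (analyticOnNhd_circleMap 0 r t (mem_univ t))
  have hre : AnalyticAt ℝ (fun t => (f (circleMap 0 r t)).re) t :=
    (Complex.reCLM.analyticAt _).comp hg
  have him : AnalyticAt ℝ (fun t => (f (circleMap 0 r t)).im) t :=
    (Complex.imCLM.analyticAt _).comp hg
  simp only [Complex.normSq_apply]
  exact (hre.mul hre).add (him.mul him)

theorem Differentiable.frontier_connectedComponentIn_inter_nonempty {f : ℂ → ℂ}
    (hf : Differentiable ℂ f) {M : ℝ} {K : Set ℂ} (hK : IsClosed K) {z : ℂ}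
    (hz : z ∈ ({w | ‖f w‖ ≤ M} ∪ K)ᶜ)
    (hb : IsBounded (connectedComponentIn ({w | ‖f w‖ ≤ M} ∪ K)ᶜ z)) :
    (frontier (connectedComponentIn ({w | ‖f w‖ ≤ M} ∪ K)ᶜ z) ∩ K).Nonempty := by
  by_contra h_disj
  have hO : IsOpen ({w | ‖f w‖ ≤ M} ∪ K)ᶜ :=
    ((isClosed_le hf.continuous.norm continuous_const).union hK).isOpen_compl
  have h_frontier : ∀ w ∈ frontier (connectedComponentIn ({w | ‖f w‖ ≤ M} ∪ K)ᶜ z),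
      ‖f w‖ ≤ M := fun w hw =>
    (not_not.mp (hO.frontier_connectedComponentIn_subset z hw)).resolve_right
      fun hwK => h_disj ⟨w, hw, hwK⟩
  exact hz (Or.inl (Complex.norm_le_of_forall_mem_frontier_norm_le hb hf.diffContOnCl
    h_frontier (subset_closure (mem_connectedComponentIn hz))))

theorem Differentiable.not_isBounded_connectedComponentIn_compl_setOf_norm_le {f : ℂ → ℂ}
    (hf : Differentiable ℂ f) {M : ℝ} {z : ℂ} (hz : z ∈ {w | ‖f w‖ ≤ M}ᶜ) :
    ¬ IsBounded (connectedComponentIn {w | ‖f w‖ ≤ M}ᶜ z) := by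
  intro hb
  rw [← union_empty {w | ‖f w‖ ≤ M}] at hz hb
  obtain ⟨_, -, h⟩ := hf.frontier_connectedComponentIn_inter_nonempty isClosed_empty hz hb
  exact h

theorem Differentiable.finite_connectedComponentIn_inter_sphere {f : ℂ → ℂ}
    (hf : Differentiable ℂ f) {M : ℝ} (hM : 0 ≤ M) {K : Set ℂ} {r : ℝ} (hr : 0 ≤ r)
    (hKr : Disjoint K (sphere 0 r)) :
    {g | ∃ z ∈ ({w | ‖f w‖ ≤ M} ∪ K)ᶜ, g = connectedComponentIn ({w | ‖f w‖ ≤ M} ∪ K)ᶜ z ∧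
      (g ∩ sphere 0 r).Nonempty}.Finite := by
  set O := ({w | ‖f w‖ ≤ M} ∪ K)ᶜ
  have h_pos : ∀ t, 0 < Complex.normSq (f (circleMap 0 r t)) - M ^ 2 ↔ circleMap 0 r t ∈ O := by
    intro t
    have hK : circleMap 0 r t ∉ K := hKr.notMem_of_mem_right (circleMap_mem_sphere 0 hr t)
    simp only [O, mem_compl_iff, mem_union, mem_ofPred_eq, hK, or_false, not_le, sub_pos,
      Complex.normSq_eq_norm_sq, sq_lt_sq₀ hM (norm_nonneg _)]
  have h_arc : ∀ s t, s ≤ t → (∀ u ∈ Icc s t, 0 < Complex.normSq (f (circleMap 0 r u)) - M ^ 2) →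
      connectedComponentIn O (circleMap 0 r s) = connectedComponentIn O (circleMap 0 r t) := by
    intro s t hst hpos
    refine connectedComponentIn_eq ((isPreconnected_Icc.image _
      (continuous_circleMap 0 r).continuousOn).subset_connectedComponentIn
        (mem_image_of_mem _ ⟨le_rfl, hst⟩) ?_ (mem_image_of_mem _ ⟨hst, le_rfl⟩))
    rintro _ ⟨u, hu, rfl⟩
    exact (h_pos u).mp (hpos u hu)
  refine ((finite_image_setOf_pos_of_analyticOnNhd (a := 0) (b := 2 * Real.pi)
    (((analyticOnNhd_normSq_comp_circleMap hf r).sub analyticOnNhd_const).mono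
      (subset_univ _)) h_arc)).subset ?_
  rintro _ ⟨z, -, rfl, w, hwg, hws⟩
  rw [← abs_of_nonneg hr, ← image_circleMap_Ioc] at hws
  obtain ⟨t, ht, rfl⟩ := hws
  exact ⟨t, ⟨Ioc_subset_Icc_self ht, (h_pos t).mpr (connectedComponentIn_subset _ _ hwg)⟩,
    (connectedComponentIn_eq hwg).symm⟩

theorem Differentiable.isBounded_iUnion_isBounded_connectedComponentIn {f : ℂ → ℂ}
    (hf : Differentiable ℂ f) {M : ℝ} (hM : 0 ≤ M) {K : Set ℂ} (hK : IsCompact K) :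
    IsBounded (⋃ g ∈ {g : Set ℂ |
      (∃ z ∈ ({w | ‖f w‖ ≤ M} ∪ K)ᶜ, g = connectedComponentIn ({w | ‖f w‖ ≤ M} ∪ K)ᶜ z) ∧
        IsBounded g}, g) := by
  set O := ({w | ‖f w‖ ≤ M} ∪ K)ᶜ
  obtain ⟨r, hr, hKr⟩ := hK.isBounded.subset_ball_lt 0 0
  have h_finite := hf.finite_connectedComponentIn_inter_sphere hM hr.le
    (disjoint_of_subset_left hKr sphere_disjoint_ball.symm)
  have h_cover : (⋃ g ∈ {g | (∃ z ∈ O, g = connectedComponentIn O z) ∧ IsBounded g}, g) ⊆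
      closedBall 0 r ∪ ⋃ g ∈ {g | (∃ z ∈ O, g = connectedComponentIn O z ∧
        (g ∩ sphere 0 r).Nonempty) ∧ IsBounded g}, g := by
    refine iUnion₂_subset ?_
    rintro _ ⟨⟨z, hz, rfl⟩, hb⟩
    by_cases h_in : connectedComponentIn O z ⊆ closedBall 0 r
    · exact h_in.trans subset_union_left
    · obtain ⟨w, hw, hwK⟩ := hf.frontier_connectedComponentIn_inter_nonempty hK.isClosed hz hb
      have h_ball := inter_comm _ _ ▸ mem_closure_iff.mp hw.1 _ isOpen_ball (hKr hwK)
      have h_sphere := isPreconnected_connectedComponentIn.inter_sphere_nonempty h_ball h_in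
      exact fun x hx => Or.inr (mem_biUnion ⟨⟨z, hz, rfl, h_sphere⟩, hb⟩ hx)
  exact (isBounded_closedBall.union ((isBounded_biUnion (h_finite.subset fun _ hg => hg.1)).mpr
    fun _ hg => hg.2)).subset h_cover

theorem Differentiable.isArakeljanC_setOf_norm_le {f : ℂ → ℂ} (hf : Differentiable ℂ f) {M : ℝ}
    (hM : 0 ≤ M) : IsArakeljanC {z | ‖f z‖ ≤ M} :=
  ⟨fun _ hz => hf.not_isBounded_connectedComponentIn_compl_setOf_norm_le hz,
    fun _ hK _ _ => hf.isBounded_iUnion_isBounded_connectedComponentIn hM hK⟩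

theorem entire_bounded_iff_exists_arakeljan_superset_general
    (f : ℂ → ℂ) (hf : Differentiable ℂ f)
    (C : Set ℂ) :
    (∃ M : ℝ, ∀ z ∈ C, ‖f z‖ ≤ M) ↔
      ∃ C₁ : Set ℂ, IsClosed C₁ ∧ IsArakeljanC C₁ ∧ C ⊆ C₁ ∧
        ∃ M : ℝ, ∀ z ∈ C₁, ‖f z‖ ≤ M := by
  constructor
  · rintro ⟨M, hM⟩
    exact ⟨{z | ‖f z‖ ≤ max M 0}, isClosed_le hf.continuous.norm continuous_const,
      hf.isArakeljanC_setOf_norm_le (le_max_right M 0),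
      fun z hz => (hM z hz).trans (le_max_left M 0), max M 0, fun _ hz => hz⟩
  · rintro ⟨C₁, -, -, hCC₁, M, hM⟩
    exact ⟨M, fun z hz => hM z (hCC₁ hz)⟩

/-- An entire function `f` is bounded on a closed set `C ≠ ℂ` iff there
is a closed Arakeljan set `C₁ ⊇ C` in `ℂ` on which `f` is bounded. -/
theorem entire_bounded_iff_exists_arakeljan_superset
    (f : ℂ → ℂ) (hf : Differentiable ℂ f)
    (C : Set ℂ) (hC : IsClosed C) (hCne : C ≠ Set.univ) :
    (∃ M : ℝ, ∀ z ∈ C, ‖f z‖ ≤ M) ↔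
      ∃ C₁ : Set ℂ, IsClosed C₁ ∧ IsArakeljanC C₁ ∧ C ⊆ C₁ ∧
        ∃ M : ℝ, ∀ z ∈ C₁, ‖f z‖ ≤ M :=
  entire_bounded_iff_exists_arakeljan_superset_general f hf C
end

section
/- The union of two disjoint closed Arakeljan sets E and F in ℂ is again an Arakeljan set in ℂ. -/
/-!
Eilenberg's criterion: for a closed set `A ⊆ ℂ` and `z ∉ A`, the function `w ↦ w - z` has a
continuous logarithm on `A` when `z` lies in an unbounded component of `ℂ \ A` (a logarithm is
transported along a path from a far-away point, where one exists on a disc), and has none when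
`z` lies in a bounded component. Logarithms on two closed sets meeting in a preconnected set glue,
which gives Janiszewski's theorem: if `A ∩ B` is bounded and preconnected and `z` lies in
unbounded components of `ℂ \ A` and of `ℂ \ B`, then it lies in an unbounded component of
`ℂ \ (A ∪ B)`. For disjoint `E` and `F` this applies to `A = E`, `B = F`, and, for a closed disc
`D ⊇ K`, to `A = E ∪ D`, `B = F ∪ D`: a bounded component of `ℂ \ (E ∪ F ∪ K)` outside `D` lies in
a bounded component of `ℂ \ (E ∪ D)` or of `ℂ \ (F ∪ D)`.
-/

open Set Metric

open Bornology Complex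
open scoped Real

def HasContinuousLogOn {X : Type*} [TopologicalSpace X] (g : X → ℂ) (s : Set X) : Prop :=
  ∃ L : X → ℂ, ContinuousOn L s ∧ ∀ x ∈ s, exp (L x) = g x

section Log

variable {X : Type*} [TopologicalSpace X] {g : X → ℂ} {s t : Set X}

theorem HasContinuousLogOn.mono (h : HasContinuousLogOn g s) (hts : t ⊆ s) :
    HasContinuousLogOn g t :=
  let ⟨L, hLc, hL⟩ := h
  ⟨L, hLc.mono hts, fun x hx => hL x (hts hx)⟩

theorem HasContinuousLogOn.congr {g' : X → ℂ} (h : HasContinuousLogOn g s) (hg : EqOn g g' s) :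
    HasContinuousLogOn g' s :=
  let ⟨L, hLc, hL⟩ := h
  ⟨L, hLc, fun x hx => (hL x hx).trans (hg hx)⟩

theorem eqOn_of_exp_eq {f₁ f₂ : X → ℂ} (hs : IsPreconnected s) (h₁ : ContinuousOn f₁ s)
    (h₂ : ContinuousOn f₂ s) (he : ∀ x ∈ s, exp (f₁ x) = exp (f₂ x)) {x₀ : X} (hx₀ : x₀ ∈ s)
    (h₀ : f₁ x₀ = f₂ x₀) : EqOn f₁ f₂ s :=
  isCoveringMap_exp.eqOn_of_comp_eqOn hs h₁ h₂ (fun x hx => Subtype.ext (he x hx)) hx₀ h₀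

/-- Two logarithms of `g` on a preconnected set differ by a constant, so logarithms on closed
sets with preconnected intersection can be glued. -/
theorem HasContinuousLogOn.union (hs : IsClosed s) (ht : IsClosed t)
    (hst : IsPreconnected (s ∩ t)) (h₁ : HasContinuousLogOn g s) (h₂ : HasContinuousLogOn g t) :
    HasContinuousLogOn g (s ∪ t) := by
  obtain ⟨L₁, hL₁c, hL₁⟩ := h₁
  obtain ⟨L₂, hL₂c, hL₂⟩ := h₂
  obtain ⟨c, hc1, hc⟩ : ∃ c : ℂ, exp c = 1 ∧ EqOn L₁ (fun x => L₂ x + c) (s ∩ t) := by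
    rcases (s ∩ t).eq_empty_or_nonempty with hempty | ⟨p, hp⟩
    · exact ⟨0, exp_zero, by simp [hempty]⟩
    have hc1 : exp (L₁ p - L₂ p) = 1 := by
      rw [exp_sub, hL₁ p hp.1, ← hL₂ p hp.2, div_self (exp_ne_zero _)]
    refine ⟨L₁ p - L₂ p, hc1, eqOn_of_exp_eq hst (hL₁c.mono inter_subset_left)
      ((hL₂c.mono inter_subset_right).add continuousOn_const) (fun x hx => ?_) hp (by ring)⟩
    rw [exp_add, hc1, mul_one, hL₁ x hx.1, hL₂ x hx.2]
  classical
  refine ⟨s.piecewise L₁ (fun x => L₂ x + c), ?_, fun x hx => ?_⟩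
  · refine ContinuousOn.union_of_isClosed ?_ ?_ hs ht
    · exact hL₁c.congr fun x hx => piecewise_eq_of_mem _ _ _ hx
    · refine ContinuousOn.congr (f := fun x => L₂ x + c) (hL₂c.add continuousOn_const)
        fun x hx => ?_
      by_cases hxs : x ∈ s
      · rw [piecewise_eq_of_mem _ _ _ hxs, hc ⟨hxs, hx⟩]
      · rw [piecewise_eq_of_notMem _ _ _ hxs]
  by_cases hxs : x ∈ s
  · rw [piecewise_eq_of_mem _ _ _ hxs, hL₁ x hxs]
  · rw [piecewise_eq_of_notMem _ _ _ hxs, exp_add, hc1, mul_one, hL₂ x (hx.resolve_left hxs)]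

/-- Homotopy lifting for the covering map `exp : ℂ → ℂ \ {0}`. -/
theorem HasContinuousLogOn.of_homotopy {H : unitInterval → X → ℂ}
    (hH : ContinuousOn (fun p : unitInterval × X => H p.1 p.2) (univ ×ˢ s))
    (hne : ∀ t, ∀ x ∈ s, H t x ≠ 0) (h₀ : HasContinuousLogOn (H 0) s) :
    HasContinuousLogOn (H 1) s := by
  classical
  obtain ⟨L, hLc, hL⟩ := h₀
  let H' : C(unitInterval × s, {z : ℂ // z ≠ 0}) :=
    ⟨fun p => ⟨H p.1 p.2, hne p.1 p.2 p.2.2⟩, (hH.comp_continuous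
      (continuous_fst.prodMk (continuous_subtype_val.comp continuous_snd))
      fun p => ⟨mem_univ _, p.2.2⟩).subtype_mk _⟩
  let Λ := isCoveringMap_exp.liftHomotopy H' ⟨s.domRestrict L, hLc.domRestrict⟩
    fun a => Subtype.ext (hL a a.2).symm
  refine ⟨fun x => if hx : x ∈ s then Λ (1, ⟨x, hx⟩) else 0, ?_, fun x hx => ?_⟩
  · rw [continuousOn_iff_continuous_domRestrict, domRestrict_dite]
    fun_prop
  · dsimp only
    rw [dif_pos hx]
    exact congr_arg Subtype.val
      (congr_fun (isCoveringMap_exp.liftHomotopy_lifts H' _ _) (1, ⟨x, hx⟩))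

theorem StarConvex.hasContinuousLogOn {E : Type*} [AddCommGroup E] [Module ℝ E]
    [TopologicalSpace E] [ContinuousAdd E] [ContinuousSMul ℝ E] {x : E} {s : Set E}
    (hs : StarConvex ℝ x s) {g : E → ℂ} (hg : ContinuousOn g s) (hne : ∀ y ∈ s, g y ≠ 0) :
    HasContinuousLogOn g s := by
  rcases s.eq_empty_or_nonempty with rfl | hs₀
  · exact ⟨0, continuousOn_empty _, by simp⟩
  have hmem : ∀ t : unitInterval, ∀ y ∈ s, (1 - (t : ℝ)) • x + (t : ℝ) • y ∈ s := fun t y hy =>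
    hs hy (sub_nonneg.2 t.2.2) t.2.1 (by ring)
  have h₀ : HasContinuousLogOn (fun _ => g x) s :=
    ⟨fun _ => log (g x), continuousOn_const, fun _ _ => exp_log (hne x (hs.mem hs₀))⟩
  simpa using HasContinuousLogOn.of_homotopy
    (H := fun t y => g ((1 - (t : ℝ)) • x + (t : ℝ) • y))
    (hg.comp (by fun_prop) fun p hp => hmem p.1 p.2 hp.2) (fun t y hy => hne _ (hmem t y hy))
    (by simpa using h₀)

end Log

/-- `θ ↦ L (circleMap z R θ)` and `θ ↦ L (circleMap z R 0) + θ * I` lift the same map through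
`exp` and agree at `0`, but only the first is `2π`-periodic. -/
theorem not_hasContinuousLogOn_sub_sphere (z : ℂ) {R : ℝ} (hR : 0 < R) :
    ¬ HasContinuousLogOn (· - z) (sphere z R) := by
  rintro ⟨L, hLc, hL⟩
  have hc : ∀ θ, circleMap z R θ - z = R * exp (θ * I) := fun θ => by
    rw [circleMap_sub_center, circleMap_zero]
  have hlift := eqOn_of_exp_eq (f₁ := fun θ => L (circleMap z R θ))
    (f₂ := fun θ : ℝ => L (circleMap z R 0) + θ * I) isPreconnected_univ
    (hLc.comp_continuous (continuous_circleMap z R) (circleMap_mem_sphere z hR.le)).continuousOn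
    (by fun_prop) (fun θ _ => ?_) (mem_univ 0) (by simp)
  · have h2π := hlift (mem_univ (2 * π))
    have hper := periodic_circleMap z R 0
    rw [zero_add] at hper
    simp only [hper] at h2π
    apply two_pi_I_ne_zero
    push_cast at h2π
    linear_combination -h2π
  · rw [exp_add, hL _ (circleMap_mem_sphere z hR.le θ), hL _ (circleMap_mem_sphere z hR.le 0)]
    dsimp only
    rw [hc, hc]
    simp

theorem frontier_connectedComponentIn_compl_subset {X : Type*} [TopologicalSpace X]
    [LocallyConnectedSpace X] {S : Set X} (hS : IsClosed S) (z : X) :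
    frontier (connectedComponentIn Sᶜ z) ⊆ S := by
  intro x hx
  by_contra hxS
  obtain ⟨y, hyx, hyz⟩ := mem_closure_iff.1 hx.1 _ hS.isOpen_compl.connectedComponentIn
    (mem_connectedComponentIn hxS)
  have hxz : x ∈ connectedComponentIn Sᶜ z := by
    rw [connectedComponentIn_eq hyz, ← connectedComponentIn_eq hyx]
    exact mem_connectedComponentIn hxS
  exact hx.2 (by rwa [hS.isOpen_compl.connectedComponentIn.interior_eq])

theorem connectedComponentIn_subset_of_frontier_subset {X : Type*} [TopologicalSpace X]
    [LocallyConnectedSpace X] {S T : Set X} (hS : IsClosed S) {z : X} (hz : z ∉ S)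
    (hT : frontier (connectedComponentIn Sᶜ z) ⊆ T) :
    connectedComponentIn Tᶜ z ⊆ connectedComponentIn Sᶜ z := by
  by_cases hzT : z ∈ T
  · simp [connectedComponentIn_eq_empty (F := Tᶜ) (x := z) (by simpa using hzT)]
  refine isPreconnected_connectedComponentIn.subset_of_closure_inter_subset
    hS.isOpen_compl.connectedComponentIn
    ⟨z, mem_connectedComponentIn hzT, mem_connectedComponentIn hz⟩ ?_
  rintro x ⟨hxU, hxT⟩
  by_contra hx
  exact connectedComponentIn_subset _ _ hxT
    (hT ⟨hxU, hS.isOpen_compl.connectedComponentIn.interior_eq.symm ▸ hx⟩)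

theorem HasContinuousLogOn.sub_of_joinedIn {A : Set ℂ} {z z' : ℂ}
    (h : HasContinuousLogOn (· - z') A) (hzz' : JoinedIn Aᶜ z' z) :
    HasContinuousLogOn (· - z) A := by
  obtain ⟨γ, hγ⟩ := hzz'
  simpa using HasContinuousLogOn.of_homotopy (H := fun t w => w - γ t) (by fun_prop)
    (fun t w hw => sub_ne_zero.2 fun h => hγ t (h ▸ hw)) (by simpa using h)

theorem hasContinuousLogOn_sub_of_not_isBounded {A : Set ℂ} (hA : IsClosed A)
    (hAb : IsBounded A) {z : ℂ} (hz : z ∉ A) (hU : ¬ IsBounded (connectedComponentIn Aᶜ z)) :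
    HasContinuousLogOn (· - z) A := by
  obtain ⟨M, hM, hAM⟩ := hAb.subset_ball_lt 0 0
  obtain ⟨z', hz'U, hz'M⟩ : ∃ z' ∈ connectedComponentIn Aᶜ z, M ≤ ‖z'‖ := by
    by_contra! h
    exact hU (isBounded_ball.subset fun y hy => mem_ball_zero_iff.2 (h y hy))
  have hfar : HasContinuousLogOn (· - z') A :=
    ((convex_ball 0 M).starConvex (mem_ball_self hM)).hasContinuousLogOn (by fun_prop)
      (fun w hw => sub_ne_zero.2 fun h => (mem_ball_zero_iff.1 hw).not_ge (h ▸ hz'M)) |>.mono hAM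
  have hUpath : IsPathConnected (connectedComponentIn Aᶜ z) :=
    hA.isOpen_compl.connectedComponentIn.isConnected_iff_isPathConnected.1
      (isConnected_connectedComponentIn_iff.2 hz)
  exact hfar.sub_of_joinedIn ((hUpath.joinedIn z' hz'U z (mem_connectedComponentIn hz)).mono
    (connectedComponentIn_subset _ _))

/-- If `z` lies in a bounded component `U` of `ℂ \ A`, a logarithm of `w - z` on `A` would extend
(by Tietze) to a nonvanishing map on a large closed disc about `z` that equals `w - z` outside `U`;
its logarithm on the disc would restrict to one of `w - z` on the boundary circle. -/
theorem not_hasContinuousLogOn_sub_of_isBounded {A : Set ℂ} (hA : IsClosed A) {z : ℂ}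
    (hz : z ∉ A) (hU : IsBounded (connectedComponentIn Aᶜ z)) :
    ¬ HasContinuousLogOn (· - z) A := by
  rintro ⟨L, hLc, hL⟩
  classical
  set U := connectedComponentIn Aᶜ z
  obtain ⟨G, hG⟩ := ContinuousMap.exists_restrict_eq hA ⟨A.domRestrict L, hLc.domRestrict⟩
  have hGA : ∀ w ∈ A, G w = L w := fun w hw => DFunLike.congr_fun hG ⟨w, hw⟩
  set Ψ : ℂ → ℂ := U.piecewise (fun w => exp (G w)) (· - z)
  have hΨc : Continuous Ψ := Continuous.piecewise (fun w hw => by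
      have hwA := frontier_connectedComponentIn_compl_subset hA z hw
      rw [hGA w hwA, hL w hwA]) (by fun_prop) (by fun_prop)
  have hΨne : ∀ w, Ψ w ≠ 0 := fun w => by
    by_cases hw : w ∈ U
    · simp [Ψ, hw, exp_ne_zero]
    · simp only [Ψ, piecewise_eq_of_notMem _ _ _ hw, sub_ne_zero]
      rintro rfl
      exact hw (mem_connectedComponentIn hz)
  obtain ⟨R, hR, hUR⟩ := hU.subset_ball_lt 0 z
  refine not_hasContinuousLogOn_sub_sphere z hR ?_
  refine (((convex_closedBall z R).starConvex (mem_closedBall_self hR.le)).hasContinuousLogOn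
    hΨc.continuousOn fun w _ => hΨne w).mono sphere_subset_closedBall |>.congr fun w hw => ?_
  have hwU : w ∉ U := fun h => (mem_ball.1 (hUR h)).ne (mem_sphere.1 hw)
  simp [Ψ, hwU]

theorem janiszewski_of_isBounded {A B : Set ℂ} (hA : IsClosed A) (hB : IsClosed B)
    (hAb : IsBounded A) (hBb : IsBounded B) (hAB : IsPreconnected (A ∩ B)) {z : ℂ}
    (hzA : z ∉ A) (hzB : z ∉ B) (hUA : ¬ IsBounded (connectedComponentIn Aᶜ z))
    (hUB : ¬ IsBounded (connectedComponentIn Bᶜ z)) :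
    ¬ IsBounded (connectedComponentIn (A ∪ B)ᶜ z) := fun hU =>
  not_hasContinuousLogOn_sub_of_isBounded (hA.union hB) (by simp [hzA, hzB]) hU <|
    (hasContinuousLogOn_sub_of_not_isBounded hA hAb hzA hUA).union hA hB hAB
      (hasContinuousLogOn_sub_of_not_isBounded hB hBb hzB hUB)

theorem janiszewski {A B : Set ℂ} (hA : IsClosed A) (hB : IsClosed B)
    (hABb : IsBounded (A ∩ B)) (hAB : IsPreconnected (A ∩ B)) {z : ℂ}
    (hzA : z ∉ A) (hzB : z ∉ B) (hUA : ¬ IsBounded (connectedComponentIn Aᶜ z))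
    (hUB : ¬ IsBounded (connectedComponentIn Bᶜ z)) :
    ¬ IsBounded (connectedComponentIn (A ∪ B)ᶜ z) := by
  intro hU
  obtain ⟨R, hR⟩ := (hU.union hABb).subset_closedBall 0
  have hUR : closure (connectedComponentIn (A ∪ B)ᶜ z) ⊆ closedBall 0 R :=
    closure_minimal (subset_union_left.trans hR) isClosed_closedBall
  have hcut : ∀ {C : Set ℂ}, ¬ IsBounded (connectedComponentIn Cᶜ z) →
      ¬ IsBounded (connectedComponentIn (C ∩ closedBall 0 R)ᶜ z) := fun hC h =>
    hC (h.subset (connectedComponentIn_mono _ (compl_subset_compl.2 inter_subset_left)))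
  refine janiszewski_of_isBounded (hA.inter isClosed_closedBall) (hB.inter isClosed_closedBall)
    (isBounded_closedBall.subset inter_subset_right)
    (isBounded_closedBall.subset inter_subset_right) ?_ (fun h => hzA h.1) (fun h => hzB h.1) (hcut hUA) (hcut hUB)
    (hU.subset (connectedComponentIn_subset_of_frontier_subset (hA.union hB) (by simp [hzA, hzB])
      ?_))
  · rwa [inter_inter_inter_comm, inter_self, inter_eq_left.2 (subset_union_right.trans hR)]
  · rw [← union_inter_distrib_right]
    exact subset_inter (frontier_connectedComponentIn_compl_subset (hA.union hB) z)
      (frontier_subset_closure.trans hUR)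

theorem jordanBoundary_closedBall {r : ℝ} (hr : 0 < r) : JordanBoundary (closedBall (0 : ℂ) r) := by
  refine ⟨1, fun _ => sphere 0 r, fun _ => ⟨fun w => r • w, by fun_prop,
    (smul_right_injective ℂ hr.ne').injOn, ?_⟩,
    fun i j hij => absurd (Subsingleton.elim i j) hij, ?_⟩
  · rw [image_smul, smul_sphere r 0 zero_le_one]
    simp [abs_of_pos hr]
  · rw [frontier_closedBall _ hr.ne', iUnion_const]

theorem mem_biUnion_isBounded_connectedComponentIn {X : Type*} [TopologicalSpace X]
    [Bornology X] {S : Set X} {z : X} :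
    z ∈ ⋃ g ∈ {g : Set X | (∃ w ∈ S, g = connectedComponentIn S w) ∧ IsBounded g}, g ↔
      z ∈ S ∧ IsBounded (connectedComponentIn S z) := by
  simp only [mem_iUnion, exists_prop]
  constructor
  · rintro ⟨_, ⟨⟨w, -, rfl⟩, hb⟩, hz⟩
    exact ⟨connectedComponentIn_subset _ _ hz, connectedComponentIn_eq hz ▸ hb⟩
  · rintro ⟨hz, hb⟩
    exact ⟨_, ⟨⟨z, hz, rfl⟩, hb⟩, mem_connectedComponentIn hz⟩

theorem isBounded_connectedComponentIn_union_or {A B D : Set ℂ} (hA : IsClosed A)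
    (hB : IsClosed B) (hD : IsClosed D) (hDb : IsBounded D) (hDc : IsPreconnected D)
    (hAB : Disjoint A B) {z : ℂ} (hz : z ∉ A ∪ B ∪ D)
    (hU : IsBounded (connectedComponentIn (A ∪ B ∪ D)ᶜ z)) :
    IsBounded (connectedComponentIn (A ∪ D)ᶜ z) ∨ IsBounded (connectedComponentIn (B ∪ D)ᶜ z) := by
  have hAD_BD : (A ∪ D) ∩ (B ∪ D) = D := by
    rw [← inter_union_distrib_right, hAB.inter_eq, empty_union]
  have hunion : (A ∪ D) ∪ (B ∪ D) = A ∪ B ∪ D := (union_union_distrib_right A B D).symm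
  by_contra! h
  exact janiszewski (hA.union hD) (hB.union hD) (by rwa [hAD_BD]) (by rwa [hAD_BD])
    (fun h => hz (hunion ▸ Or.inl h)) (fun h => hz (hunion ▸ Or.inr h)) h.1 h.2 (hunion ▸ hU)

/-- The union of two disjoint closed Arakeljan sets in `ℂ` is again an
Arakeljan set in `ℂ`. -/
theorem isArakeljanC_union
    (E F : Set ℂ) (hE : IsClosed E) (hF : IsClosed F) (hdisj : Disjoint E F)
    (hEA : IsArakeljanC E) (hFA : IsArakeljanC F) :
    IsArakeljanC (E ∪ F) := by
  refine ⟨fun z hz => ?_, fun K hK _ _ => ?_⟩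
  · rw [mem_compl_iff, mem_union, not_or] at hz
    exact janiszewski hE hF (by simp [hdisj.inter_eq]) (hdisj.inter_eq ▸ isPreconnected_empty)
      hz.1 hz.2 (hEA.1 z hz.1) (hFA.1 z hz.2)
  obtain ⟨r, hr, hKr⟩ := hK.isBounded.subset_ball_lt 0 0
  set D := closedBall (0 : ℂ) r
  have hDc : IsCompact D := isCompact_closedBall 0 r
  have hD : IsConnected D := (convex_closedBall 0 r).isConnected (nonempty_closedBall.2 hr.le)
  have hEFD : (E ∪ F ∪ D)ᶜ ⊆ (E ∪ F ∪ K)ᶜ :=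
    compl_subset_compl.2 (union_subset_union_right _ (hKr.trans ball_subset_closedBall))
  refine ((hDc.isBounded.union (hEA.2 D hDc hD (jordanBoundary_closedBall hr))).union
    (hFA.2 D hDc hD (jordanBoundary_closedBall hr))).subset fun z hz => ?_
  obtain ⟨hzK, hzb⟩ := mem_biUnion_isBounded_connectedComponentIn.1 hz
  simp only [mem_union, mem_biUnion_isBounded_connectedComponentIn]
  by_cases hzD : z ∈ D
  · exact Or.inl (Or.inl hzD)
  simp only [mem_compl_iff, mem_union, not_or] at hzK
  rcases isBounded_connectedComponentIn_union_or hE hF hDc.isClosed hDc.isBounded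
    hD.isPreconnected hdisj (by simp [*]) (hzb.subset (connectedComponentIn_mono _ hEFD))
    with h | h
  · exact Or.inl (Or.inr ⟨by simp [*], h⟩)
  · exact Or.inr ⟨by simp [*], h⟩
end

section
/- Let G ⊆ ℂ be a domain, let C₁ be a closed subset in G (C₁ ⊆ G, closed in ℂ) with C₁ ≠ G that is an Arakeljan set in G, and let L ⊆ G be a connected compact set whose topological boundary is a finite union of pairwise disjoint Jordan curves and such that (∂L) \ C₁ ≠ ∅. Then C₁ \ L has no G-holes and C₁ \ L is an Arakeljan set in G. -/
open Set Metric

/-- If `C₁ ⊆ G` is closed in `ℂ`, `C₁ ≠ G`, is an Arakeljan set in `G`,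
and `L ⊆ G` is a connected compact set whose boundary is a finite union of pairwise
disjoint Jordan curves with `(∂L) \ C₁ ≠ ∅`, then `C₁ \ L` has no `G`-holes and is an
Arakeljan set in `G`. -/
theorem isArakeljan_diff_compact
    (G C₁ L : Set ℂ) (hGopen : IsOpen G) (hGconn : IsConnected G)
    (hC₁G : C₁ ⊆ G) (hC₁closed : IsClosed C₁) (hC₁ne : C₁ ≠ G)
    (hC₁A : IsArakeljan G C₁)
    (hLG : L ⊆ G) (hLcomp : IsCompact L) (hLconn : IsConnected L)
    (hLbd : JordanBoundary L) (hfr : (frontier L \ C₁).Nonempty) :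
    (∀ g : Set ℂ, ¬ IsGHole G (C₁ \ L) g) ∧ IsArakeljan G (C₁ \ L) := by
  obtain ⟨w, hwfr, hwC₁⟩ := hfr
  have hwL : w ∈ L := by
    have := frontier_subset_closure (s := L) hwfr
    rwa [hLcomp.isClosed.closure_eq] at this
  have hLX : L ⊆ G \ (C₁ \ L) := fun x hx => ⟨hLG hx, fun hc => hc.2 hx⟩
  have noHoles : ∀ g : Set ℂ, ¬ IsGHole G (C₁ \ L) g := by
    intro g hg
    obtain ⟨⟨z, hz, rfl⟩, M, hMcomp, hMG, hgM⟩ := hg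
    set X := G \ (C₁ \ L) with hX
    -- find w' ∈ G \ C₁ with the component at z equal to the component at w'
    have key : ∃ w' : ℂ, w' ∈ G \ C₁ ∧
        connectedComponentIn X z = connectedComponentIn X w' := by
      by_cases hzL : z ∈ L
      · have hLsub : L ⊆ connectedComponentIn X z :=
          hLconn.isPreconnected.subset_connectedComponentIn hzL hLX
        exact ⟨w, ⟨hLG hwL, hwC₁⟩, connectedComponentIn_eq (hLsub hwL)⟩
      · have hzC₁ : z ∉ C₁ := fun h => hz.2 ⟨h, hzL⟩
        exact ⟨z, ⟨hz.1, hzC₁⟩, rfl⟩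
    obtain ⟨w', hw', heq⟩ := key
    have hsub : connectedComponentIn (G \ C₁) w' ⊆ connectedComponentIn X w' :=
      connectedComponentIn_mono w' (fun x hx => ⟨hx.1, fun hc => hx.2 hc.1⟩)
    exact hC₁A.1 (connectedComponentIn (G \ C₁) w')
      ⟨⟨w', hw', rfl⟩, M, hMcomp, hMG, fun x hx => hgM (heq ▸ hsub hx)⟩
  refine ⟨noHoles, noHoles, ?_⟩
  intro K hKcomp hKconn hKG hKbd
  obtain ⟨L₀, hL₀comp, hL₀G, hL₀⟩ := hC₁A.2 K hKcomp hKconn hKG hKbd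
  refine ⟨L₀ ∪ (L ∪ K), hL₀comp.union (hLcomp.union hKcomp),
    union_subset hL₀G (union_subset hLG hKG), ?_⟩
  rintro x hx
  simp only [mem_iUnion, mem_setOf_eq] at hx
  obtain ⟨g, hg, hxg⟩ := hx
  obtain ⟨⟨z, hz, rfl⟩, M, hMcomp, hMG, hgM⟩ := hg
  by_cases hxLK : x ∈ L ∪ K
  · exact Or.inr hxLK
  · left
    have hxX : x ∈ G \ (C₁ \ L ∪ K) := connectedComponentIn_subset _ _ hxg
    have hxC₁ : x ∉ C₁ := fun h => hxX.2 (Or.inl ⟨h, fun hL => hxLK (Or.inl hL)⟩)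
    have hxGK : x ∈ G \ (C₁ ∪ K) := ⟨hxX.1, fun h => h.elim hxC₁ (fun h => hxLK (Or.inr h))⟩
    have heq : connectedComponentIn (G \ (C₁ \ L ∪ K)) z
        = connectedComponentIn (G \ (C₁ \ L ∪ K)) x := connectedComponentIn_eq hxg
    have hsub : connectedComponentIn (G \ (C₁ ∪ K)) x
        ⊆ connectedComponentIn (G \ (C₁ \ L ∪ K)) x :=
      connectedComponentIn_mono x (fun y hy =>
        ⟨hy.1, fun hc => hy.2 (hc.elim (fun h => Or.inl h.1) Or.inr)⟩)
    have hhole : IsGHole G (C₁ ∪ K) (connectedComponentIn (G \ (C₁ ∪ K)) x) :=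
      ⟨⟨x, hxGK, rfl⟩, M, hMcomp, hMG, fun y hy => hgM (heq ▸ hsub hy)⟩
    have : x ∈ connectedComponentIn (G \ (C₁ ∪ K)) x := mem_connectedComponentIn hxGK
    exact hL₀ (by simpa using ⟨_, hhole, this⟩)
end

section
/- Let G = {z ∈ ℂ : 0 < |z| < 1} be the punctured open unit disc, E = {z ∈ ℂ : |z| = 1/2} and F = {z ∈ ℂ : |z| = 1/4}. Then E and F are disjoint Arakeljan sets in G, the open annulus A = {z ∈ ℂ : 1/4 < |z| < 1/2} is a G-hole of E ∪ F, and consequently E ∪ F is not an Arakeljan set in G. -/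
/-!
In an annulus domain `a < ‖z‖ < b` with `0 ≤ a`, the holes of a compact set `S` stay in the
smallest closed annulus `r ≤ ‖z‖ ≤ R` containing `S`: a hole point below `r` (or above `R`) lies
in an open annulus free of `S` that reaches the inner (or outer) boundary circle of the domain,
and this annulus would then lie in the hole, whose closure must stay inside the domain. For a
circle `S` that closed annulus is `S` itself, so circles have no holes, and adding a compact `K`
keeps all holes in a compact annulus. The open annulus between two circles, on the other hand,
is a whole component of the complement of their union, since the norm cannot cross either
circle along a connected set.
-/

open Set Metric

open Complex

section Annulus

variable {a b : ℝ}

lemma setOf_norm_mem_Ioo_eq_image (ha : 0 ≤ a) :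
    {z : ℂ | ‖z‖ ∈ Ioo a b} =
      (fun p : ℝ × ℝ => (p.1 : ℂ) * exp (p.2 * I)) '' (Ioo a b ×ˢ univ) := by
  ext z
  constructor
  · intro hz
    exact ⟨(‖z‖, arg z), ⟨hz, trivial⟩, norm_mul_exp_arg_mul_I z⟩
  · rintro ⟨⟨t, θ⟩, ⟨ht, -⟩, rfl⟩
    have ht0 : 0 ≤ t := ha.trans ht.1.le
    simpa [norm_exp_ofReal_mul_I, abs_of_nonneg ht0] using ht

lemma isPreconnected_setOf_norm_mem_Ioo (ha : 0 ≤ a) :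
    IsPreconnected {z : ℂ | ‖z‖ ∈ Ioo a b} := by
  rw [setOf_norm_mem_Ioo_eq_image ha]
  exact (isPreconnected_Ioo.prod isPreconnected_univ).image _ (by fun_prop)

lemma ofReal_mem_closure_setOf_norm_mem_Ioo (ha : 0 ≤ a) (hab : a < b) {t : ℝ}
    (ht : t ∈ Icc a b) : (t : ℂ) ∈ closure {z : ℂ | ‖z‖ ∈ Ioo a b} := by
  have hsub : ofReal '' Ioo a b ⊆ {z : ℂ | ‖z‖ ∈ Ioo a b} := by
    rintro _ ⟨s, hs, rfl⟩
    simpa [abs_of_nonneg (ha.trans hs.1.le)] using hs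
  rw [← closure_Ioo hab.ne] at ht
  exact closure_mono hsub (image_closure_subset_closure_image continuous_ofReal ⟨t, ht, rfl⟩)

lemma isCompact_setOf_norm_mem_Icc {E : Type*} [NormedAddCommGroup E] [ProperSpace E]
    (a b : ℝ) : IsCompact {z : E | ‖z‖ ∈ Icc a b} :=
  (isCompact_closedBall 0 b).of_isClosed_subset (isClosed_Icc.preimage continuous_norm)
    fun _ hz => mem_closedBall_zero_iff.2 hz.2

end Annulus

lemma IsCompact.exists_Icc_superset {K : Set ℝ} {a b : ℝ} (hK : IsCompact K)
    (hKab : K ⊆ Ioo a b) : ∃ r R, a < r ∧ R < b ∧ K ⊆ Icc r R := by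
  rcases K.eq_empty_or_nonempty with rfl | hne
  · exact ⟨a + 1, b - 1, by linarith, by linarith, empty_subset _⟩
  · exact ⟨sInf K, sSup K, (hKab (hK.sInf_mem hne)).1, (hKab (hK.sSup_mem hne)).2,
      hK.isBounded.subset_Icc_sInf_sSup⟩

section GHole

variable {G S g : Set ℂ}

lemma IsGHole.subset_diff_s13 (hg : IsGHole G S g) : g ⊆ G \ S := by
  obtain ⟨⟨z, -, rfl⟩, -⟩ := hg
  exact connectedComponentIn_subset _ _

lemma IsGHole.nonempty (hg : IsGHole G S g) : g.Nonempty := by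
  obtain ⟨⟨z, hz, rfl⟩, -⟩ := hg
  exact ⟨z, mem_connectedComponentIn hz⟩

lemma IsGHole.closure_subset_s13 {C : Set ℂ} {w : ℂ} (hg : IsGHole G S g) (hw : w ∈ g)
    (hC : IsPreconnected C) (hwC : w ∈ C) (hCS : C ⊆ G \ S) : closure C ⊆ G := by
  obtain ⟨⟨z, -, rfl⟩, L, hL, hLG, hgL⟩ := hg
  have hCg : C ⊆ connectedComponentIn (G \ S) z := by
    rw [connectedComponentIn_eq hw]
    exact hC.subset_connectedComponentIn hwC hCS
  exact (closure_minimal (hCg.trans hgL) hL.isClosed).trans hLG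

end GHole

section AnnulusDomain

variable {a b : ℝ} {S g : Set ℂ}

lemma IsGHole.Icc_subset_of_setOf_norm_mem_Ioo_subset {s t : ℝ} {w : ℂ}
    (hg : IsGHole {z : ℂ | ‖z‖ ∈ Ioo a b} S g) (hs : 0 ≤ s) (hw : w ∈ g) (hwst : ‖w‖ ∈ Ioo s t)
    (hst : {z : ℂ | ‖z‖ ∈ Ioo s t} ⊆ {z : ℂ | ‖z‖ ∈ Ioo a b} \ S) : Icc s t ⊆ Ioo a b := by
  intro u hu
  have hclosure := hg.closure_subset_s13 hw (isPreconnected_setOf_norm_mem_Ioo hs) hwst hst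
    (ofReal_mem_closure_setOf_norm_mem_Ioo hs (hwst.1.trans hwst.2) hu)
  simpa [abs_of_nonneg (hs.trans hu.1)] using hclosure

lemma IsGHole.norm_mem_Icc {r R : ℝ} {w : ℂ} (ha : 0 ≤ a)
    (hS : S ⊆ {z : ℂ | ‖z‖ ∈ Icc r R}) (hg : IsGHole {z : ℂ | ‖z‖ ∈ Ioo a b} S g)
    (hw : w ∈ g) : ‖w‖ ∈ Icc r R := by
  have hwG : ‖w‖ ∈ Ioo a b := (hg.subset_diff_s13 hw).1
  by_contra hwrR
  rcases not_and_or.1 hwrR with hwr | hwR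
  · rw [not_le] at hwr
    have hinner : {z : ℂ | ‖z‖ ∈ Ioo a (min r b)} ⊆ {z : ℂ | ‖z‖ ∈ Ioo a b} \ S :=
      fun z hz => ⟨⟨hz.1, hz.2.trans_le (min_le_right _ _)⟩,
        fun hzS => (hS hzS).1.not_gt (hz.2.trans_le (min_le_left _ _))⟩
    have := hg.Icc_subset_of_setOf_norm_mem_Ioo_subset ha hw ⟨hwG.1, lt_min hwr hwG.2⟩ hinner
      (left_mem_Icc.2 (hwG.1.trans (lt_min hwr hwG.2)).le)
    exact this.1.false
  · rw [not_le] at hwR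
    have houter : {z : ℂ | ‖z‖ ∈ Ioo (max R a) b} ⊆ {z : ℂ | ‖z‖ ∈ Ioo a b} \ S :=
      fun z hz => ⟨⟨(le_max_right _ _).trans_lt hz.1, hz.2⟩,
        fun hzS => (hS hzS).2.not_gt ((le_max_left _ _).trans_lt hz.1)⟩
    have := hg.Icc_subset_of_setOf_norm_mem_Ioo_subset (le_max_of_le_right ha) hw
      ⟨max_lt hwR hwG.1, hwG.2⟩ houter (right_mem_Icc.2 ((max_lt hwR hwG.1).trans hwG.2).le)
    exact this.2.false

lemma exists_isCompact_superset_iUnion_isGHole (ha : 0 ≤ a) (hS : IsCompact S)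
    (hSG : S ⊆ {z : ℂ | ‖z‖ ∈ Ioo a b}) :
    ∃ L : Set ℂ, IsCompact L ∧ L ⊆ {z : ℂ | ‖z‖ ∈ Ioo a b} ∧
      (⋃ g ∈ {g : Set ℂ | IsGHole {z : ℂ | ‖z‖ ∈ Ioo a b} S g}, g) ⊆ L := by
  obtain ⟨r, R, har, hRb, hrR⟩ :=
    (hS.image continuous_norm).exists_Icc_superset (image_subset_iff.2 hSG)
  refine ⟨{z : ℂ | ‖z‖ ∈ Icc r R}, isCompact_setOf_norm_mem_Icc r R,
    fun z hz => ⟨har.trans_le hz.1, hz.2.trans_lt hRb⟩, iUnion₂_subset fun g hg => ?_⟩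
  exact fun w hw => hg.norm_mem_Icc ha (image_subset_iff.1 hrR) hw

lemma isArakeljan_of_isCompact (ha : 0 ≤ a) (hS : IsCompact S)
    (hSG : S ⊆ {z : ℂ | ‖z‖ ∈ Ioo a b})
    (hholes : ∀ g, ¬ IsGHole {z : ℂ | ‖z‖ ∈ Ioo a b} S g) :
    IsArakeljan {z : ℂ | ‖z‖ ∈ Ioo a b} S :=
  ⟨hholes, fun _ hK _ hKG _ =>
    exists_isCompact_superset_iUnion_isGHole ha (hS.union hK) (union_subset hSG hKG)⟩

lemma isArakeljan_setOf_norm_eq {c : ℝ} (ha : 0 ≤ a) (hc : c ∈ Ioo a b) :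
    IsArakeljan {z : ℂ | ‖z‖ ∈ Ioo a b} {z : ℂ | ‖z‖ = c} := by
  have hcircle : {z : ℂ | ‖z‖ = c} = {z : ℂ | ‖z‖ ∈ Icc c c} := by simp
  refine isArakeljan_of_isCompact ha (hcircle ▸ isCompact_setOf_norm_mem_Icc c c)
    (fun z (hz : ‖z‖ = c) => show ‖z‖ ∈ Ioo a b from hz ▸ hc) fun g hg => ?_
  obtain ⟨w, hw⟩ := hg.nonempty
  have hwc := hg.norm_mem_Icc ha hcircle.le hw
  exact (hg.subset_diff_s13 hw).2 (le_antisymm hwc.2 hwc.1)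

lemma isGHole_setOf_norm_mem_Ioo {r R : ℝ} (hr : 0 ≤ r) (har : a < r) (hrR : r < R)
    (hRb : R < b) :
    IsGHole {z : ℂ | ‖z‖ ∈ Ioo a b} ({z : ℂ | ‖z‖ = r} ∪ {z : ℂ | ‖z‖ = R})
      {z : ℂ | ‖z‖ ∈ Ioo r R} := by
  set U := {z : ℂ | ‖z‖ ∈ Ioo a b} \ ({z : ℂ | ‖z‖ = r} ∪ {z : ℂ | ‖z‖ = R})
  have hAU : {z : ℂ | ‖z‖ ∈ Ioo r R} ⊆ U := fun z hz =>
    ⟨⟨har.trans hz.1, hz.2.trans hRb⟩, by rintro (h | h) <;> simp_all⟩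
  obtain ⟨m, hm⟩ : ∃ m : ℂ, ‖m‖ ∈ Ioo r R :=
    ⟨((r + R) / 2 : ℝ), by
      rw [norm_real, Real.norm_of_nonneg (by linarith)]
      constructor <;> linarith⟩
  have hcomp : connectedComponentIn U m ⊆ {z : ℂ | ‖z‖ ∈ Ioo r R} := by
    intro w hw
    have hnorms : IsPreconnected (norm '' connectedComponentIn U m) :=
      isPreconnected_connectedComponentIn.image _ continuous_norm.continuousOn
    have hm' : ‖m‖ ∈ norm '' connectedComponentIn U m :=
      mem_image_of_mem _ (mem_connectedComponentIn (hAU hm))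
    have hw' : ‖w‖ ∈ norm '' connectedComponentIn U m := mem_image_of_mem _ hw
    have hcross : ∀ u ∈ connectedComponentIn U m, ‖u‖ ≠ r ∧ ‖u‖ ≠ R := fun u hu =>
      not_or.1 (connectedComponentIn_subset U _ hu).2
    constructor
    · by_contra! hwr
      obtain ⟨u, hu, hur⟩ := hnorms.Icc_subset hw' hm' ⟨hwr, hm.1.le⟩
      exact (hcross u hu).1 hur
    · by_contra! hwR
      obtain ⟨u, hu, huR⟩ := hnorms.Icc_subset hm' hw' ⟨hm.2.le, hwR⟩
      exact (hcross u hu).2 huR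
  have hAcomp : {z : ℂ | ‖z‖ ∈ Ioo r R} = connectedComponentIn U m :=
    ((isPreconnected_setOf_norm_mem_Ioo hr).subset_connectedComponentIn hm hAU).antisymm hcomp
  exact ⟨⟨m, hAU hm, hAcomp⟩, {z : ℂ | ‖z‖ ∈ Icc r R}, isCompact_setOf_norm_mem_Icc r R,
    fun z hz => ⟨har.trans_le hz.1, hz.2.trans_lt hRb⟩, fun z hz => ⟨hz.1.le, hz.2.le⟩⟩

end AnnulusDomain

/-- In the punctured open unit disc `G`, the circles `E` of radius `1/2`
and `F` of radius `1/4` are disjoint Arakeljan sets in `G`, the open annulus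
`A = {1/4 < |z| < 1/2}` is a `G`-hole of `E ∪ F`, and `E ∪ F` is not an Arakeljan set
in `G`. -/
theorem punctured_disc_counterexample
    (G E F A : Set ℂ)
    (hG : G = {z : ℂ | 0 < ‖z‖ ∧ ‖z‖ < 1})
    (hE : E = {z : ℂ | ‖z‖ = 1 / 2})
    (hF : F = {z : ℂ | ‖z‖ = 1 / 4})
    (hA : A = {z : ℂ | 1 / 4 < ‖z‖ ∧ ‖z‖ < 1 / 2}) :
    Disjoint E F ∧ IsArakeljan G E ∧ IsArakeljan G F ∧
      IsGHole G (E ∪ F) A ∧ ¬ IsArakeljan G (E ∪ F) := by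
  replace hG : G = {z : ℂ | ‖z‖ ∈ Ioo 0 1} := hG
  replace hA : A = {z : ℂ | ‖z‖ ∈ Ioo (1 / 4) (1 / 2)} := hA
  subst hG hE hF hA
  have hhole : IsGHole {z : ℂ | ‖z‖ ∈ Ioo 0 1} ({z : ℂ | ‖z‖ = 1 / 2} ∪ {z : ℂ | ‖z‖ = 1 / 4})
      {z : ℂ | ‖z‖ ∈ Ioo (1 / 4) (1 / 2)} := by
    rw [union_comm]
    exact isGHole_setOf_norm_mem_Ioo (by norm_num) (by norm_num) (by norm_num) (by norm_num)
  refine ⟨?_, isArakeljan_setOf_norm_eq le_rfl (by norm_num),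
    isArakeljan_setOf_norm_eq le_rfl (by norm_num), hhole, fun h => h.1 _ hhole⟩
  refine disjoint_left.2 fun z (hzE : ‖z‖ = 1 / 2) (hzF : ‖z‖ = 1 / 4) => ?_
  norm_num [hzE] at hzF
end
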